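/- arXiv:1310.7779 — 10 statements merged into one kernel-verified Lean document; each statement's English description precedes it below -/
import Mathlib

section
/- Let k be a field, n ≥ 2, and let a₁, …, aₙ and b₁, …, bₙ be two n-tuples of positive integers, each with gcd equal to 1. If the kernel of the k-algebra homomorphism k[x₁, …, xₙ] → k[t] sending xᵢ ↦ t^{aᵢ} equals the kernel of the k-algebra homomorphism sending xᵢ ↦ t^{bᵢ}, then aᵢ = bᵢ for all i. -/
/-!
The binomial `xᵢ^{aⱼ} - xⱼ^{aᵢ}` lies in `I(a)`, so if `I(a) = I(b)` it also lies in `I(b)`,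
which means `aⱼ bᵢ = aᵢ bⱼ`. Thus `a` and `b` are proportional; fixing `j`, `bⱼ` divides
`gcd_i (aⱼ bᵢ) = aⱼ` and symmetrically `aⱼ ∣ bⱼ`, so `aⱼ = bⱼ`.
-/

open MvPolynomial

section MonomialCurve

variable {σ R : Type*} [CommRing R]

theorem X_pow_sub_X_pow_mem_ker_aeval (a : σ → ℕ) (i j : σ) :
    (X i ^ a j - X j ^ a i : MvPolynomial σ R) ∈
      RingHom.ker (aeval fun l => (Polynomial.X : Polynomial R) ^ a l) := by
  simp [RingHom.mem_ker, ← pow_mul, mul_comm]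

theorem mul_eq_mul_of_X_pow_sub_X_pow_mem_ker_aeval [Nontrivial R] {b : σ → ℕ} {i j : σ}
    {u v : ℕ}
    (hmem : (X i ^ u - X j ^ v : MvPolynomial σ R) ∈
      RingHom.ker (aeval fun l => (Polynomial.X : Polynomial R) ^ b l)) :
    b i * u = b j * v := by
  rw [RingHom.mem_ker] at hmem
  simp only [map_sub, map_pow, aeval_X, ← pow_mul, sub_eq_zero] at hmem
  simpa using congrArg Polynomial.natDegree hmem

end MonomialCurve

theorem Finset.eq_of_cross_mul_eq_of_gcd_eq_one {ι : Type*} {s : Finset ι} {a b : ι → ℕ}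
    (hcross : ∀ i ∈ s, ∀ j ∈ s, b i * a j = b j * a i)
    (hga : s.gcd a = 1) (hgb : s.gcd b = 1) {j : ι} (hj : j ∈ s) :
    a j = b j := by
  have hba : b j ∣ a j := by
    have hd : b j ∣ s.gcd fun i => a j * b i :=
      Finset.dvd_gcd fun i hi => ⟨a i, by rw [mul_comm (a j)]; exact hcross i hi j hj⟩
    rwa [Finset.gcd_mul_left, hgb, mul_one, normalize_eq] at hd
  have hab : a j ∣ b j := by
    have hd : a j ∣ s.gcd fun i => b j * a i :=
      Finset.dvd_gcd fun i hi => ⟨b i, by rw [mul_comm (a j), ← hcross i hi j hj]⟩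
    rwa [Finset.gcd_mul_left, hga, mul_one, normalize_eq] at hd
  exact Nat.dvd_antisymm hab hba

theorem stmt_1_general (k : Type*) [Field k] (n : ℕ)
    (a b : Fin n → ℕ)
    (hga : Finset.univ.gcd a = 1) (hgb : Finset.univ.gcd b = 1)
    (h : RingHom.ker (MvPolynomial.aeval
            (fun i : Fin n => (Polynomial.X : Polynomial k) ^ a i) :
            MvPolynomial (Fin n) k →ₐ[k] Polynomial k)
       = RingHom.ker (MvPolynomial.aeval
            (fun i : Fin n => (Polynomial.X : Polynomial k) ^ b i) :
            MvPolynomial (Fin n) k →ₐ[k] Polynomial k)) :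
    a = b := by
  have hcross : ∀ i j, b i * a j = b j * a i := fun i j =>
    mul_eq_mul_of_X_pow_sub_X_pow_mem_ker_aeval (h ▸ X_pow_sub_X_pow_mem_ker_aeval a i j)
  funext j
  exact Finset.eq_of_cross_mul_eq_of_gcd_eq_one (fun i _ j _ => hcross i j) hga hgb
    (Finset.mem_univ j)

/-- If two tuples of positive integers with gcd 1 define the same monomial curve ideal,
they are equal. -/
theorem stmt_1 (k : Type*) [Field k] (n : ℕ) (hn : 2 ≤ n)
    (a b : Fin n → ℕ) (hpa : ∀ i, 0 < a i) (hpb : ∀ i, 0 < b i)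
    (hga : Finset.univ.gcd a = 1) (hgb : Finset.univ.gcd b = 1)
    (h : RingHom.ker (MvPolynomial.aeval
            (fun i : Fin n => (Polynomial.X : Polynomial k) ^ a i) :
            MvPolynomial (Fin n) k →ₐ[k] Polynomial k)
       = RingHom.ker (MvPolynomial.aeval
            (fun i : Fin n => (Polynomial.X : Polynomial k) ^ b i) :
            MvPolynomial (Fin n) k →ₐ[k] Polynomial k)) :
    a = b :=
  stmt_1_general k n a b hga hgb h
end

section
/- With A and a₁, a₂, a₃, a₄ as in the context: the integers a₁, a₂, a₃, a₄ are all positive, A·(a₁, a₂, a₃, a₄)ᵀ = 0, and if moreover gcd(a₁, a₂, a₃, a₄) = 1, then for each i ∈ {1, 2, 3, 4} the integer cᵢ is the least positive integer r such that r·aᵢ lies in the additive submonoid of ℕ generated by {aⱼ : j ≠ i}; that is, A is a principal matrix of (a₁, a₂, a₃, a₄). -/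
/-!
The signed maximal minors `a` of the last three rows of `A` are orthogonal to those rows
(Laplace expansion of a determinant with a repeated row), hence to all of them since the columns
of `A` sum to zero; each one expands into a sum of monomials in the `d`'s, so `a > 0`.
When `gcd a = 1`, a Bézout vector `u` with `u ⬝ a = 1` completes the three rows to a matrix of
determinant `1`, so every integer relation `v ⬝ a = 0` is a combination `yᵀ A` of the rows.
A relation `s aᵢ = ∑_{j ≠ i} tⱼ aⱼ` thus gives `y` with `(yᵀ A)ⱼ ≥ 0` for `j ≠ i` and
`(yᵀ A)ᵢ = -s`. As `(yᵀ A)ⱼ = ∑_{k ≠ j} d_{kj} (y_k - y_j)`, the sign pattern of `A` forces `yᵢ`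
to exceed every `y_k` with `d_{ki} > 0`, whence `s ≥ ∑_k d_{ki} = cᵢ`; and row `i` of `A a = 0`
exhibits `cᵢ aᵢ` in the semigroup generated by the other `aⱼ`.
-/

namespace Matrix

variable {R : Type*} [CommRing R] {n : ℕ}

def signedMinors (B : Matrix (Fin n) (Fin (n + 1)) R) : Fin (n + 1) → R :=
  fun j => (-1) ^ (j : ℕ) * (B.submatrix id j.succAbove).det

theorem det_eq_dotProduct_signedMinors (M : Matrix (Fin (n + 1)) (Fin (n + 1)) R) :
    M.det = M 0 ⬝ᵥ signedMinors (M.submatrix Fin.succ id) := by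
  rw [det_succ_row_zero, dotProduct]
  exact Finset.sum_congr rfl fun j _ => by simp only [signedMinors]; ring_nf; rfl

theorem mulVec_signedMinors (B : Matrix (Fin n) (Fin (n + 1)) R) :
    B *ᵥ signedMinors B = 0 := by
  ext i
  have h := det_eq_dotProduct_signedMinors (B.submatrix (vecCons i id) id)
  rw [det_zero_of_row_eq (Fin.succ_ne_zero i).symm rfl] at h
  exact h.symm

theorem exists_vecMul_eq_of_dotProduct_signedMinors_eq_zero
    (M : Matrix (Fin (n + 1)) (Fin (n + 1)) R) {u v : Fin (n + 1) → R}
    (hu : IsUnit (u ⬝ᵥ signedMinors (M.submatrix Fin.succ id)))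
    (hv : v ⬝ᵥ signedMinors (M.submatrix Fin.succ id) = 0) :
    ∃ y, y ᵥ* M = v := by
  set s := signedMinors (M.submatrix Fin.succ id)
  set N := M.updateRow 0 u
  have hN : N.submatrix Fin.succ id = M.submatrix Fin.succ id := by
    ext i j
    simp [N]
  have hN0 : N 0 = u := updateRow_self
  have hunit : IsUnit N := by
    rwa [isUnit_iff_isUnit_det, det_eq_dotProduct_signedMinors, hN, hN0]
  obtain ⟨x, rfl⟩ := vecMul_surjective_iff_isUnit.2 hunit v
  have hsucc : ∀ i : Fin n, (N *ᵥ s) i.succ = 0 := fun i => by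
    have := congrFun (mulVec_signedMinors (M.submatrix Fin.succ id)) i
    rwa [← hN] at this
  have hx0 : x 0 = 0 := by
    rw [← dotProduct_mulVec, dotProduct, Fin.sum_univ_succ] at hv
    simp only [hsucc, mul_zero, Finset.sum_const_zero, add_zero] at hv
    rwa [show (N *ᵥ s) 0 = u ⬝ᵥ s from hN0 ▸ rfl, hu.mul_left_eq_zero] at hv
  refine ⟨x, ?_⟩
  ext j
  simp [vecMul, dotProduct, Fin.sum_univ_succ, hx0, N]

theorem mulVec_signedMinors_submatrix_succ (M : Matrix (Fin (n + 1)) (Fin (n + 1)) R)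
    (hM : ∀ j, ∑ i, M i j = 0) : M *ᵥ signedMinors (M.submatrix Fin.succ id) = 0 := by
  have hrows : ∀ i : Fin n, M i.succ ⬝ᵥ signedMinors (M.submatrix Fin.succ id) = 0 :=
    congrFun (mulVec_signedMinors (M.submatrix Fin.succ id))
  have hrow0 : M 0 = -∑ i : Fin n, M i.succ := by
    ext j; simpa [Fin.sum_univ_succ, add_eq_zero_iff_eq_neg] using hM j
  ext i
  refine Fin.cases ?_ hrows i
  rw [mulVec, hrow0, neg_dotProduct, sum_dotProduct]
  simp [hrows]

theorem exists_vecMul_eq_of_gcd_signedMinors_eq_one (M : Matrix (Fin (n + 1)) (Fin (n + 1)) ℤ)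
    {v : Fin (n + 1) → ℤ} (hgcd : Finset.univ.gcd (signedMinors (M.submatrix Fin.succ id)) = 1)
    (hv : v ⬝ᵥ signedMinors (M.submatrix Fin.succ id) = 0) : ∃ y, y ᵥ* M = v := by
  obtain ⟨u, hu⟩ := Finset.gcd_eq_sum_mul Finset.univ (signedMinors (M.submatrix Fin.succ id))
  refine exists_vecMul_eq_of_dotProduct_signedMinors_eq_zero M (u := u) ?_ hv
  rw [dotProduct_comm, dotProduct, ← hu, hgcd]
  exact isUnit_one

end Matrix

theorem Finset.gcd_neg {α β : Type*} [CommMonoidWithZero α] [NormalizedGCDMonoid α]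
    [HasDistribNeg α] (s : Finset β) (f : β → α) : s.gcd (-f) = s.gcd f := by
  classical
  induction s using Finset.induction_on with
  | empty => simp
  | insert b s _ ih => rw [Finset.gcd_insert, Finset.gcd_insert, ih, Pi.neg_apply, neg_gcd]

open Matrix

section NumericalSemigroup

variable {ι : Type*} [Fintype ι] [DecidableEq ι]

theorem mem_closure_ne_iff (a : ι → ℕ) (i : ι) {m : ℕ} :
    m ∈ AddSubmonoid.closure {m | ∃ j, j ≠ i ∧ m = a j} ↔
      ∃ t : ι → ℕ, t i = 0 ∧ m = ∑ j, t j * a j := by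
  constructor
  · intro hm
    induction hm using AddSubmonoid.closure_induction with
    | mem x hx =>
      obtain ⟨j, hj, rfl⟩ := hx
      exact ⟨Pi.single j 1, Pi.single_eq_of_ne hj.symm 1, by simp [Pi.single_apply]⟩
    | zero => exact ⟨0, rfl, by simp⟩
    | add x y _ _ hx hy =>
      obtain ⟨t, ht, rfl⟩ := hx
      obtain ⟨t', ht', rfl⟩ := hy
      exact ⟨t + t', by simp [ht, ht'], by simp [add_mul, Finset.sum_add_distrib]⟩
  · rintro ⟨t, ht, rfl⟩
    refine AddSubmonoid.sum_mem _ fun j _ => ?_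
    rcases eq_or_ne j i with rfl | hj
    · simp [ht]
    · have hj' : a j ∈ {m | ∃ j, j ≠ i ∧ m = a j} := ⟨j, hj, rfl⟩
      simpa using nsmul_mem (AddSubmonoid.subset_closure hj') (t j)

theorem isLeast_of_mulVec_eq_zero (A : Matrix ι ι ℤ) (a : ι → ℕ) {i : ι} {c : ℕ}
    (hc : 0 < c) (hAii : A i i = -c) (hoff : ∀ j ≠ i, 0 ≤ A i j)
    (hker : A *ᵥ (fun j => (a j : ℤ)) = 0)
    (hrel : ∀ v, v ⬝ᵥ (fun j => (a j : ℤ)) = 0 → ∃ y, y ᵥ* A = v)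
    (hmin : ∀ y, (∀ j ≠ i, 0 ≤ (y ᵥ* A) j) → (y ᵥ* A) i < 0 → (y ᵥ* A) i ≤ A i i) :
    IsLeast {s : ℕ | 0 < s ∧ s * a i ∈ AddSubmonoid.closure {m | ∃ j, j ≠ i ∧ m = a j}} c := by
  refine ⟨⟨hc, (mem_closure_ne_iff a i).2 ?_⟩, fun s ⟨hs, hmem⟩ => ?_⟩
  · -- row `i` of `A a = 0` reads `c aᵢ = ∑_{j ≠ i} A i j aⱼ`
    set t : ι → ℤ := fun j => A i j + if j = i then (c : ℤ) else 0
    have ht : ∀ j, ((t j).toNat : ℤ) = t j := fun j => Int.toNat_of_nonneg <| by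
      rcases eq_or_ne j i with rfl | hj
      · simp [t, hAii]
      · simpa [t, hj] using hoff j hj
    refine ⟨fun j => (t j).toNat, by simp [t, hAii], ?_⟩
    have hrow : ∑ j, A i j * a j = 0 := congrFun hker i
    zify
    simp [ht, t, add_mul, Finset.sum_add_distrib, hrow]
  · obtain ⟨t, hti, hst⟩ := (mem_closure_ne_iff a i).1 hmem
    have hst' : ∑ j, (t j : ℤ) * a j = s * a i := by exact_mod_cast hst.symm
    obtain ⟨y, hy⟩ := hrel (fun j => t j - if j = i then (s : ℤ) else 0) <| by
      simp [dotProduct, sub_mul, Finset.sum_sub_distrib, hst']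
    have := hmin y (fun j hj => by simp [hy, hj]) (by simp [hy, hti, hs])
    simp [hy, hti, hAii] at this
    exact_mod_cast this

end NumericalSemigroup

section OrderedRing

variable {α : Type*} [CommRing α] [LinearOrder α] [IsStrictOrderedRing α]

theorem eq_zero_and_eq_zero_of_nonneg_mul_add_mul {p q a b : α} (hp : 0 < p) (hq : 0 < q)
    (ha : a ≤ 0) (hb : b ≤ 0) (h : 0 ≤ p * a + q * b) : a = 0 ∧ b = 0 :=
  ⟨by nlinarith [mul_nonpos_of_nonneg_of_nonpos hq.le hb],
   by nlinarith [mul_nonpos_of_nonneg_of_nonpos hp.le ha]⟩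

theorem lt_and_lt_of_bresinsky_relations {d₁₃ d₁₄ d₂₁ d₂₄ d₃₁ d₃₂ d₄₂ d₄₃ y₁ y₂ y₃ y₄ : α}
    (hd₁₃ : 0 < d₁₃) (hd₁₄ : 0 < d₁₄) (hd₂₄ : 0 < d₂₄) (hd₃₂ : 0 < d₃₂) (hd₄₂ : 0 < d₄₂)
    (hd₄₃ : 0 < d₄₃)
    (h₁ : d₂₁ * (y₂ - y₁) + d₃₁ * (y₃ - y₁) < 0)
    (h₂ : 0 ≤ d₃₂ * (y₃ - y₂) + d₄₂ * (y₄ - y₂))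
    (h₃ : 0 ≤ d₁₃ * (y₁ - y₃) + d₄₃ * (y₄ - y₃))
    (h₄ : 0 ≤ d₁₄ * (y₁ - y₄) + d₂₄ * (y₂ - y₄)) :
    y₂ < y₁ ∧ y₃ < y₁ := by
  -- Otherwise some `y_k` with `k ≠ 1` is maximal among all four; the relation `h_k` then makes
  -- the two `y`'s it involves maximal too, and one more relation forces all four to be equal.
  have hne : ¬(y₂ = y₁ ∧ y₃ = y₁) := fun ⟨h₂₁, h₃₁⟩ => by simp [h₂₁, h₃₁] at h₁
  by_contra! h
  have hle : ∀ m, y₂ ≤ m → y₃ ≤ m → y₁ ≤ m := fun m h₂m h₃m => by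
    by_cases h₂₁ : y₂ < y₁
    · exact (h h₂₁).trans h₃m
    · exact (not_lt.1 h₂₁).trans h₂m
  have max₄ : y₂ ≤ y₄ → y₃ ≤ y₄ → False := fun h₂₄ h₃₄ => by
    obtain ⟨e₁₄, e₂₄⟩ := eq_zero_and_eq_zero_of_nonneg_mul_add_mul hd₁₄ hd₂₄
      (by linarith [hle y₄ h₂₄ h₃₄]) (by linarith) h₄
    have : y₂ ≤ y₃ := by nlinarith
    exact hne ⟨by linarith, by linarith⟩
  rcases le_total y₃ y₂ with h₃₂ | h₂₃
  · rcases le_total y₄ y₂ with h₄₂ | h₂₄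
    · obtain ⟨e₃₂, e₄₂⟩ := eq_zero_and_eq_zero_of_nonneg_mul_add_mul hd₃₂ hd₄₂
        (by linarith) (by linarith) h₂
      have : y₄ ≤ y₁ := by nlinarith
      exact hne ⟨by linarith [hle y₂ le_rfl h₃₂], by linarith [hle y₂ le_rfl h₃₂]⟩
    · exact max₄ h₂₄ (h₃₂.trans h₂₄)
  · rcases le_total y₄ y₃ with h₄₃ | h₃₄
    · obtain ⟨e₁₃, e₄₃⟩ := eq_zero_and_eq_zero_of_nonneg_mul_add_mul hd₁₃ hd₄₃
        (by linarith [hle y₃ h₂₃ le_rfl]) (by linarith) h₃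
      have : y₄ ≤ y₂ := by nlinarith
      exact hne ⟨by linarith, by linarith⟩
    · exact max₄ (h₂₃.trans h₃₄) h₃₄

end OrderedRing

section Bresinsky

def bresinskyMatrix (d₁₃ d₁₄ d₂₁ d₂₄ d₃₁ d₃₂ d₄₂ d₄₃ : ℕ) : Matrix (Fin 4) (Fin 4) ℤ :=
  !![-(d₂₁ + d₃₁ : ℤ), 0, d₁₃, d₁₄;
     d₂₁, -(d₃₂ + d₄₂ : ℤ), 0, d₂₄;
     d₃₁, d₃₂, -(d₁₃ + d₄₃ : ℤ), 0;
     0, d₄₂, d₄₃, -(d₁₄ + d₂₄ : ℤ)]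

variable {d₁₃ d₁₄ d₂₁ d₂₄ d₃₁ d₃₂ d₄₂ d₄₃ : ℕ}

theorem sum_bresinskyMatrix_apply (j : Fin 4) :
    ∑ i, bresinskyMatrix d₁₃ d₁₄ d₂₁ d₂₄ d₃₁ d₃₂ d₄₂ d₄₃ i j = 0 := by
  fin_cases j <;> simp [bresinskyMatrix, Fin.sum_univ_four]

theorem bresinskyMatrix_nonneg_of_ne {i j : Fin 4} (hij : j ≠ i) :
    0 ≤ bresinskyMatrix d₁₃ d₁₄ d₂₁ d₂₄ d₃₁ d₃₂ d₄₂ d₄₃ i j := by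
  fin_cases i <;> fin_cases j <;> simp_all [bresinskyMatrix]

theorem signedMinors_bresinskyMatrix_neg (hd₁₃ : 0 < d₁₃) (hd₁₄ : 0 < d₁₄) (hd₂₁ : 0 < d₂₁)
    (hd₂₄ : 0 < d₂₄) (hd₃₁ : 0 < d₃₁) (hd₃₂ : 0 < d₃₂) (hd₄₂ : 0 < d₄₂) (hd₄₃ : 0 < d₄₃)
    (j : Fin 4) :
    signedMinors ((bresinskyMatrix d₁₃ d₁₄ d₂₁ d₂₄ d₃₁ d₃₂ d₄₂ d₄₃).submatrix Fin.succ id) j < 0 :=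
    by
  rw [← neg_pos]
  fin_cases j <;> simp [signedMinors, bresinskyMatrix, det_fin_three, Fin.succAbove, Fin.lt_def]
  all_goals rw [← sub_pos]; ring_nf; positivity

theorem vecMul_bresinskyMatrix (y : Fin 4 → ℤ) :
    y ᵥ* bresinskyMatrix d₁₃ d₁₄ d₂₁ d₂₄ d₃₁ d₃₂ d₄₂ d₄₃ =
      ![d₂₁ * (y 1 - y 0) + d₃₁ * (y 2 - y 0), d₃₂ * (y 2 - y 1) + d₄₂ * (y 3 - y 1),
        d₁₃ * (y 0 - y 2) + d₄₃ * (y 3 - y 2), d₁₄ * (y 0 - y 3) + d₂₄ * (y 1 - y 3)] := by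
  ext j
  fin_cases j <;> simp [bresinskyMatrix, vecMul, dotProduct, Fin.sum_univ_four] <;> ring

theorem vecMul_bresinskyMatrix_le_diag (hd₁₃ : 0 < d₁₃) (hd₁₄ : 0 < d₁₄) (hd₂₁ : 0 < d₂₁)
    (hd₂₄ : 0 < d₂₄) (hd₃₁ : 0 < d₃₁) (hd₃₂ : 0 < d₃₂) (hd₄₂ : 0 < d₄₂) (hd₄₃ : 0 < d₄₃)
    (i : Fin 4) (y : Fin 4 → ℤ)
    (hge : ∀ j ≠ i, 0 ≤ (y ᵥ* bresinskyMatrix d₁₃ d₁₄ d₂₁ d₂₄ d₃₁ d₃₂ d₄₂ d₄₃) j)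
    (hlt : (y ᵥ* bresinskyMatrix d₁₃ d₁₄ d₂₁ d₂₄ d₃₁ d₃₂ d₄₂ d₄₃) i < 0) :
    (y ᵥ* bresinskyMatrix d₁₃ d₁₄ d₂₁ d₂₄ d₃₁ d₃₂ d₄₂ d₄₃) i ≤
      bresinskyMatrix d₁₃ d₁₄ d₂₁ d₂₄ d₃₁ d₃₂ d₄₂ d₄₃ i i := by
  zify at hd₁₃ hd₁₄ hd₂₁ hd₂₄ hd₃₁ hd₃₂ hd₄₂ hd₄₃
  -- The matrix is invariant under the cyclic relabelling `0 → 1 → 2 → 3 → 0` of the indices,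
  -- so each case is the case `i = 0` with `y` and the `d`'s rotated.
  rw [vecMul_bresinskyMatrix] at hge hlt ⊢
  have h₀ := hge 0
  have h₁ := hge 1
  have h₂ := hge 2
  have h₃ := hge 3
  fin_cases i <;> simp [bresinskyMatrix] at h₀ h₁ h₂ h₃ hlt ⊢
  · obtain ⟨h, h'⟩ := lt_and_lt_of_bresinsky_relations hd₁₃ hd₁₄ hd₂₄ hd₃₂ hd₄₂ hd₄₃ hlt h₁ h₂ h₃
    nlinarith
  · obtain ⟨h, h'⟩ := lt_and_lt_of_bresinsky_relations (y₄ := y 0) hd₂₄ hd₂₁ hd₃₁ hd₄₃ hd₁₃ hd₁₄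
      hlt (by linarith) (by linarith) h₀
    nlinarith
  · obtain ⟨h, h'⟩ := lt_and_lt_of_bresinsky_relations (d₂₁ := (d₄₃ : ℤ)) (d₃₁ := (d₁₃ : ℤ))
      (y₁ := y 2) (y₂ := y 3) (y₃ := y 0) (y₄ := y 1) hd₃₁ hd₃₂ hd₄₂ hd₁₄ hd₂₄ hd₂₁
      (by linarith) h₃ (by linarith) h₁
    nlinarith
  · obtain ⟨h, h'⟩ := lt_and_lt_of_bresinsky_relations (y₄ := y 2) hd₄₂ hd₄₃ hd₁₃ hd₂₁ hd₃₁ hd₃₂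
      hlt h₀ (by linarith) (by linarith)
    nlinarith

end Bresinsky

theorem stmt_3_general
    (c₁ c₂ c₃ c₄ d₁₃ d₁₄ d₂₁ d₂₄ d₃₁ d₃₂ d₄₂ d₄₃ : ℕ)
    (hd₁₃ : 0 < d₁₃) (hd₁₄ : 0 < d₁₄) (hd₂₁ : 0 < d₂₁) (hd₂₄ : 0 < d₂₄)
    (hd₃₁ : 0 < d₃₁) (hd₃₂ : 0 < d₃₂) (hd₄₂ : 0 < d₄₂) (hd₄₃ : 0 < d₄₃)
    (hcol₁ : c₁ = d₂₁ + d₃₁) (hcol₂ : c₂ = d₃₂ + d₄₂)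
    (hcol₃ : c₃ = d₁₃ + d₄₃) (hcol₄ : c₄ = d₁₄ + d₂₄)
    (A : Matrix (Fin 4) (Fin 4) ℤ)
    (hA : A = !![-(c₁ : ℤ), 0, (d₁₃ : ℤ), (d₁₄ : ℤ);
                 (d₂₁ : ℤ), -(c₂ : ℤ), 0, (d₂₄ : ℤ);
                 (d₃₁ : ℤ), (d₃₂ : ℤ), -(c₃ : ℤ), 0;
                 0, (d₄₂ : ℤ), (d₄₃ : ℤ), -(c₄ : ℤ)])
    (a : Fin 4 → ℤ)
    (ha : ∀ j : Fin 4, a j = (-1) ^ ((j : ℕ) + 1) *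
        (A.submatrix (Fin.succAbove 0) (Fin.succAbove j)).det)
    :
    (∀ j, 0 < a j) ∧ A.mulVec a = 0 ∧
      (Finset.univ.gcd a = 1 →
        ∀ i : Fin 4,
          A i i = -((![c₁, c₂, c₃, c₄] i : ℕ) : ℤ) ∧
          IsLeast {s : ℕ | 0 < s ∧ s * (a i).toNat ∈
              AddSubmonoid.closure {m : ℕ | ∃ j, j ≠ i ∧ m = (a j).toNat}}
            (![c₁, c₂, c₃, c₄] i)) := by
  have hM : A = bresinskyMatrix d₁₃ d₁₄ d₂₁ d₂₄ d₃₁ d₃₂ d₄₂ d₄₃ := by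
    subst hA hcol₁ hcol₂ hcol₃ hcol₄
    ext i j
    fin_cases i <;> fin_cases j <;> simp [bresinskyMatrix]
  have ha' : a = -signedMinors (A.submatrix Fin.succ id) := by
    ext j
    simp [ha, signedMinors, pow_succ]
  have hpos : ∀ j, 0 < a j := fun j => by
    rw [ha', hM, Pi.neg_apply, neg_pos]
    exact signedMinors_bresinskyMatrix_neg hd₁₃ hd₁₄ hd₂₁ hd₂₄ hd₃₁ hd₃₂ hd₄₂ hd₄₃ j
  have hker : A *ᵥ a = 0 := by
    rw [ha', mulVec_neg, mulVec_signedMinors_submatrix_succ A (hM ▸ sum_bresinskyMatrix_apply),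
      neg_zero]
  refine ⟨hpos, hker, fun hgcd i => ?_⟩
  have hdiag : A i i = -((![c₁, c₂, c₃, c₄] i : ℕ) : ℤ) := by
    subst hA
    fin_cases i <;> rfl
  have hrel : ∀ v, v ⬝ᵥ a = 0 → ∃ y, y ᵥ* A = v := fun v hv =>
    exists_vecMul_eq_of_gcd_signedMinors_eq_one A (by rw [← Finset.gcd_neg, ← ha', hgcd])
      (by rwa [ha', dotProduct_neg, neg_eq_zero] at hv)
  have hcast : (fun j => ((a j).toNat : ℤ)) = a := funext fun j => Int.toNat_of_nonneg (hpos j).le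
  refine ⟨hdiag, isLeast_of_mulVec_eq_zero A (fun j => (a j).toNat) ?_ hdiag
    (fun j hj => hM ▸ bresinskyMatrix_nonneg_of_ne hj) (hcast ▸ hker) (hcast ▸ hrel) ?_⟩
  · fin_cases i <;> simp <;> omega
  · rw [hM]
    exact vecMul_bresinskyMatrix_le_diag hd₁₃ hd₁₄ hd₂₁ hd₂₄ hd₃₁ hd₃₂ hd₄₂ hd₄₃ i

/-- Bresinsky-type matrices: the signed minors are positive, are killed by `A`, and if
relatively prime then `A` is a principal matrix of them. -/
theorem stmt_3
    (c₁ c₂ c₃ c₄ d₁₃ d₁₄ d₂₁ d₂₄ d₃₁ d₃₂ d₄₂ d₄₃ : ℕ)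
    (hc₁ : 2 ≤ c₁) (hc₂ : 2 ≤ c₂) (hc₃ : 2 ≤ c₃) (hc₄ : 2 ≤ c₄)
    (hd₁₃ : 0 < d₁₃) (hd₁₄ : 0 < d₁₄) (hd₂₁ : 0 < d₂₁) (hd₂₄ : 0 < d₂₄)
    (hd₃₁ : 0 < d₃₁) (hd₃₂ : 0 < d₃₂) (hd₄₂ : 0 < d₄₂) (hd₄₃ : 0 < d₄₃)
    (hcol₁ : c₁ = d₂₁ + d₃₁) (hcol₂ : c₂ = d₃₂ + d₄₂)
    (hcol₃ : c₃ = d₁₃ + d₄₃) (hcol₄ : c₄ = d₁₄ + d₂₄)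
    (A : Matrix (Fin 4) (Fin 4) ℤ)
    (hA : A = !![-(c₁ : ℤ), 0, (d₁₃ : ℤ), (d₁₄ : ℤ);
                 (d₂₁ : ℤ), -(c₂ : ℤ), 0, (d₂₄ : ℤ);
                 (d₃₁ : ℤ), (d₃₂ : ℤ), -(c₃ : ℤ), 0;
                 0, (d₄₂ : ℤ), (d₄₃ : ℤ), -(c₄ : ℤ)])
    (a : Fin 4 → ℤ)
    (ha : ∀ j : Fin 4, a j = (-1) ^ ((j : ℕ) + 1) *
        (A.submatrix (Fin.succAbove 0) (Fin.succAbove j)).det)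
    :
    (∀ j, 0 < a j) ∧ A.mulVec a = 0 ∧
      (Finset.univ.gcd a = 1 →
        ∀ i : Fin 4,
          A i i = -((![c₁, c₂, c₃, c₄] i : ℕ) : ℤ) ∧
          IsLeast {s : ℕ | 0 < s ∧ s * (a i).toNat ∈
              AddSubmonoid.closure {m : ℕ | ∃ j, j ≠ i ∧ m = (a j).toNat}}
            (![c₁, c₂, c₃, c₄] i)) :=
  stmt_3_general c₁ c₂ c₃ c₄ d₁₃ d₁₄ d₂₁ d₂₄ d₃₁ d₃₂ d₄₂ d₄₃ hd₁₃ hd₁₄ hd₂₁ hd₂₄ hd₃₁ hd₃₂ hd₄₂ hd₄₃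
    hcol₁ hcol₂ hcol₃ hcol₄ A hA a ha
end

section
/- With A and a₁, a₂, a₃, a₄ as in the context, assume gcd(a₁, a₂, a₃, a₄) = 1. Then the numerical semigroup generated by a₁, a₂, a₃, a₄ is symmetric (i.e., the corresponding affine monomial curve is Gorenstein). -/
/-!
The three lower rows of `A` are relations among the `aⱼ`, and since their maximal minors are the
coprime `aⱼ`, Cramer's rule shows that they span the whole lattice `{v | v ⬝ᵥ a = 0}`. Adding
relations to a representation `z = ∑ xⱼ aⱼ` moves `(x₂, x₃, x₄)` through its class modulo this
lattice, and a descent shows that every class meets the L-shaped region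
`D = [0,c₂) × [0,c₃) × [0,d₁₄) ∪ [0,d₃₂) × [0,d₁₃) × [d₁₄,c₄)`. When `(x₂, x₃, x₄) ∈ D`, the
coefficient `x₁` is the largest one among the representations of `z` with `x₂, x₃, x₄ ≥ 0`, so
`z ∈ S ↔ 0 ≤ x₁`. Reflecting each of the two boxes of `D` through its centre maps `D` onto itself
and `z` to `F - z` with `x₁ ↦ -1 - x₁`, where `F = (c₂-1)a₂ + (c₃-1)a₃ + (d₁₄-1)a₄ - a₁`.
-/

def IsSymmetricNumericalSemigroup (S : AddSubmonoid ℕ) : Prop :=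
  ∃ F : ℕ, F ∉ S ∧ (∀ m : ℕ, F < m → m ∈ S) ∧
    ∀ z : ℤ, (∃ s ∈ S, (s : ℤ) = z) ↔ ¬ ∃ s ∈ S, (s : ℤ) = (F : ℤ) - z

open Matrix

theorem Matrix.exists_vecMul_eq_of_det_cons_eq_zero {R : Type*} [CommRing R] {n : ℕ}
    (B : Matrix (Fin n) (Fin (n + 1)) R) {u v : Fin (n + 1) → R}
    (hu : IsUnit (of (Fin.cons u B)).det) (hv : (of (Fin.cons v B)).det = 0) :
    ∃ l : Fin n → R, l ᵥ* B = v := by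
  set C : Matrix (Fin (n + 1)) (Fin (n + 1)) R := of (Fin.cons u B)
  obtain ⟨r, hr⟩ := hu.exists_left_inv
  set c := v ᵥ* C.adjugate
  have hc0 : c 0 = 0 := by
    have hC : C.updateRow 0 v = of (Fin.cons v B) := by
      ext i j; cases i using Fin.cases <;> rfl
    rw [← hv, ← hC, ← cramer_transpose_apply, cramer_eq_adjugate_mulVec, ← adjugate_transpose,
      mulVec_transpose]
  have hcC : c ᵥ* C = C.det • v := by
    rw [vecMul_vecMul, adjugate_mul, vecMul_smul, vecMul_one]
  refine ⟨r • Fin.tail c, ?_⟩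
  have hsplit : c ᵥ* C = Fin.tail c ᵥ* B := by
    ext j
    simp only [vecMul, dotProduct, Fin.sum_univ_succ, hc0, zero_mul, zero_add]; rfl
  rw [smul_vecMul, ← hsplit, hcC, smul_smul, hr, one_smul]

theorem Matrix.det_of_cons_eq_neg_dotProduct {R : Type*} [CommRing R] {n : ℕ}
    (B : Matrix (Fin n) (Fin (n + 1)) R) {a : Fin (n + 1) → R}
    (ha : ∀ j : Fin (n + 1), a j = (-1) ^ ((j : ℕ) + 1) * (B.submatrix id j.succAbove).det)
    (w : Fin (n + 1) → R) : (of (Fin.cons w B)).det = -(w ⬝ᵥ a) := by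
  rw [det_succ_row_zero, dotProduct, ← Finset.sum_neg_distrib]
  refine Finset.sum_congr rfl fun j _ => ?_
  rw [ha, pow_succ]
  change _ * w j * (B.submatrix id j.succAbove).det = _
  ring

theorem AddSubmonoid.mem_closure_range_iff_exists_dotProduct {ι : Type*} [Fintype ι]
    (f : ι → ℤ) (z : ℤ) :
    z ∈ AddSubmonoid.closure (Set.range f) ↔ ∃ m : ι → ℤ, 0 ≤ m ∧ m ⬝ᵥ f = z := by
  rw [AddSubmonoid.mem_closure_range_iff_of_fintype]
  constructor
  · rintro ⟨n, rfl⟩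
    exact ⟨fun i => n i, fun i => Int.natCast_nonneg _, by simp [dotProduct]⟩
  · rintro ⟨m, hm, rfl⟩
    exact ⟨fun i => (m i).toNat, by simp [dotProduct, Int.toNat_of_nonneg (hm _)]⟩

theorem exists_mem_closure_range_toNat_iff {ι : Type*} (a : ι → ℤ) (ha : 0 ≤ a) (z : ℤ) :
    (∃ s ∈ AddSubmonoid.closure (Set.range fun j => (a j).toNat), (s : ℤ) = z) ↔
      z ∈ AddSubmonoid.closure (Set.range a) := by
  have hmap : (AddSubmonoid.closure (Set.range fun j => (a j).toNat)).map
      (Nat.castAddMonoidHom ℤ) = AddSubmonoid.closure (Set.range a) := by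
    rw [AddMonoidHom.map_mclosure, ← Set.range_comp]
    congr
    ext j
    simp [Int.toNat_of_nonneg (ha j)]
  rw [← hmap, AddSubmonoid.mem_map]
  rfl

theorem AddSubmonoid.one_notMem_closure_of_two_le {s : Set ℕ} (hs : ∀ n ∈ s, 2 ≤ n) :
    1 ∉ AddSubmonoid.closure s := by
  suffices ∀ n ∈ AddSubmonoid.closure s, n = 0 ∨ 2 ≤ n by simpa using this 1
  intro n hn
  induction hn using AddSubmonoid.closure_induction with
  | mem n hn => exact .inr (hs n hn)
  | zero => exact .inl rfl
  | add m n _ _ hm hn => omega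

theorem isSymmetricNumericalSemigroup_of_forall_iff (S : AddSubmonoid ℕ) (F : ℤ) (hS : ∃ n, n ∉ S)
    (hF : ∀ z : ℤ, (∃ s ∈ S, (s : ℤ) = z) ↔ ¬ ∃ s ∈ S, (s : ℤ) = F - z) :
    IsSymmetricNumericalSemigroup S := by
  have hmem : ∀ m : ℕ, F < m → m ∈ S := fun m hm => by
    obtain ⟨s, hs, hsm⟩ := (hF m).mpr fun ⟨s, _, hs⟩ => by omega
    rwa [Nat.cast_inj.mp hsm] at hs
  obtain ⟨n, hn⟩ := hS
  have hF₀ : 0 ≤ F := by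
    by_contra h
    exact hn (hmem n (by omega))
  lift F to ℕ using hF₀
  exact ⟨F, fun h => (hF 0).mp ⟨0, S.zero_mem, rfl⟩ ⟨F, h, by simp⟩,
    fun m hm => hmem m (by omega), hF⟩

theorem exists_dotProduct_eq_one_of_gcd_eq_one {ι : Type*} [Fintype ι] {a : ι → ℤ}
    (h : Finset.univ.gcd a = 1) : ∃ u, u ⬝ᵥ a = 1 := by
  obtain ⟨g, hg⟩ := Finset.gcd_eq_sum_mul Finset.univ a
  exact ⟨g, by rw [h] at hg; simp [dotProduct, hg, mul_comm]⟩

/-- The off-diagonal entries of `A`; its diagonal `-cᵢ` is determined by the zero column sums.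
Vectors are indexed by `Fin 4`, so coordinate `j` below is the index `j + 1` of the header. -/
structure BresinskyMatrix where
  (d₁₃ d₁₄ d₂₁ d₂₄ d₃₁ d₃₂ d₄₂ d₄₃ : ℤ)
  d₁₃_pos : 0 < d₁₃
  d₁₄_pos : 0 < d₁₄
  d₂₁_pos : 0 < d₂₁
  d₂₄_pos : 0 < d₂₄
  d₃₁_pos : 0 < d₃₁
  d₃₂_pos : 0 < d₃₂
  d₄₂_pos : 0 < d₄₂
  d₄₃_pos : 0 < d₄₃

namespace BresinskyMatrix

variable (M : BresinskyMatrix)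

def c₁ : ℤ := M.d₂₁ + M.d₃₁
def c₂ : ℤ := M.d₃₂ + M.d₄₂
def c₃ : ℤ := M.d₁₃ + M.d₄₃
def c₄ : ℤ := M.d₁₄ + M.d₂₄

def rows : Matrix (Fin 3) (Fin 4) ℤ :=
  !![M.d₂₁, -M.c₂, 0, M.d₂₄; M.d₃₁, M.d₃₂, -M.c₃, 0; 0, M.d₄₂, M.d₄₃, -M.c₄]

def gen : Fin 4 → ℤ :=
  ![M.c₂ * M.c₃ * M.d₁₄ + M.d₁₃ * M.d₃₂ * M.d₂₄,
    M.d₂₁ * M.c₃ * M.c₄ + M.d₂₄ * M.d₃₁ * M.d₄₃,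
    M.c₁ * M.d₃₂ * M.c₄ + M.d₃₁ * M.d₄₂ * M.d₁₄,
    M.d₂₁ * M.d₃₂ * M.d₄₃ + M.d₂₁ * M.c₃ * M.d₄₂ + M.c₂ * M.d₃₁ * M.d₄₃]

theorem gen_eq_minor (j : Fin 4) :
    M.gen j = (-1) ^ ((j : ℕ) + 1) * (M.rows.submatrix id j.succAbove).det := by
  fin_cases j <;>
  simp [gen, rows, det_fin_three, c₁, c₂, c₃, c₄, Fin.succAbove] <;> ring

theorem vecMul_rows (l : Fin 3 → ℤ) : l ᵥ* M.rows =
    ![l 0 * M.d₂₁ + l 1 * M.d₃₁, -(l 0 * M.c₂) + l 1 * M.d₃₂ + l 2 * M.d₄₂,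
      -(l 1 * M.c₃) + l 2 * M.d₄₃, l 0 * M.d₂₄ - l 2 * M.c₄] := by
  ext j
  fin_cases j <;> simp [rows, vecMul, dotProduct, Fin.sum_univ_three, mul_comm, sub_eq_add_neg]

theorem dotProduct_gen (x : Fin 4 → ℤ) :
    x ⬝ᵥ M.gen = x 0 * M.gen 0 + x 1 * M.gen 1 + x 2 * M.gen 2 + x 3 * M.gen 3 := by
  simp [dotProduct, Fin.sum_univ_four]

theorem d₂₄_lt_gen_zero : M.d₂₄ < M.gen 0 := by
  have h₁ := mul_pos (mul_pos (add_pos M.d₃₂_pos M.d₄₂_pos) (add_pos M.d₁₃_pos M.d₄₃_pos))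
    M.d₁₄_pos
  have h₂ := mul_pos M.d₁₃_pos M.d₃₂_pos
  simp only [gen, c₂, c₃, cons_val]
  nlinarith [M.d₂₄_pos]

theorem two_le_gen (j : Fin 4) : 2 ≤ M.gen j := by
  obtain ⟨d₁₃, d₁₄, d₂₁, d₂₄, d₃₁, d₃₂, d₄₂, d₄₃, h₁₃, h₁₄, h₂₁, h₂₄, h₃₁, h₃₂, h₄₂, h₄₃⟩ := M
  have one_le : ∀ a b c : ℤ, 0 < a → 0 < b → 0 < c → 1 ≤ a * b * c := fun a b c ha hb hc => by
    have := mul_pos (mul_pos ha hb) hc; omega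
  fin_cases j <;> simp [gen, c₁, c₂, c₃, c₄]
  · linarith [one_le (d₃₂ + d₄₂) (d₁₃ + d₄₃) d₁₄ (by omega) (by omega) h₁₄,
      one_le d₁₃ d₃₂ d₂₄ h₁₃ h₃₂ h₂₄]
  · linarith [one_le d₂₁ (d₁₃ + d₄₃) (d₁₄ + d₂₄) h₂₁ (by omega) (by omega),
      one_le d₂₄ d₃₁ d₄₃ h₂₄ h₃₁ h₄₃]
  · linarith [one_le (d₂₁ + d₃₁) d₃₂ (d₁₄ + d₂₄) (by omega) h₃₂ (by omega),
      one_le d₃₁ d₄₂ d₁₄ h₃₁ h₄₂ h₁₄]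
  · linarith [one_le d₂₁ d₃₂ d₄₃ h₂₁ h₃₂ h₄₃, one_le d₂₁ (d₁₃ + d₄₃) d₄₂ h₂₁ (by omega) h₄₂,
      one_le (d₃₂ + d₄₂) d₃₁ d₄₃ (by omega) h₃₁ h₄₃]

theorem gen_nonneg : 0 ≤ M.gen := fun j => (by norm_num : (0 : ℤ) ≤ 2).trans (M.two_le_gen j)

theorem dotProduct_vecMul_rows_gen (l : Fin 3 → ℤ) : l ᵥ* M.rows ⬝ᵥ M.gen = 0 := by
  rw [dotProduct_gen, vecMul_rows]
  simp only [gen, c₁, c₂, c₃, c₄, cons_val]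
  ring

def TailNonneg (x : Fin 4 → ℤ) : Prop := 0 ≤ x 1 ∧ 0 ≤ x 2 ∧ 0 ≤ x 3

/-- The region `D` of the header, in the last three coordinates. -/
def InDomain (x : Fin 4 → ℤ) : Prop :=
  0 ≤ x 1 ∧ x 1 < M.c₂ ∧ 0 ≤ x 2 ∧ x 2 < M.c₃ ∧ 0 ≤ x 3 ∧ x 3 < M.c₄ ∧
    (x 3 < M.d₁₄ ∨ x 1 < M.d₃₂ ∧ x 2 < M.d₁₃)

/-- Adding relations does not change `x ⬝ᵥ gen`; the summand `x 3` makes the potential decrease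
also under the last row, which leaves `x 0` unchanged. -/
def potential (x : Fin 4 → ℤ) : ℤ := x ⬝ᵥ M.gen - x 0 * M.gen 0 + x 3

theorem potential_nonneg {x : Fin 4 → ℤ} (hx : TailNonneg x) : 0 ≤ M.potential x := by
  obtain ⟨h₁, h₂, h₃⟩ := hx
  rw [potential, dotProduct_gen]
  nlinarith [mul_nonneg h₁ (M.gen_nonneg 1), mul_nonneg h₂ (M.gen_nonneg 2),
    mul_nonneg h₃ (M.gen_nonneg 3)]

theorem potential_add_vecMul_rows_lt (x : Fin 4 → ℤ) {l : Fin 3 → ℤ} (hl : 0 ≤ l)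
    (hl' : 0 < ∑ i, l i) : M.potential (x + l ᵥ* M.rows) < M.potential x := by
  have hpot : M.potential (x + l ᵥ* M.rows) =
      M.potential x - ((l ᵥ* M.rows) 0 * M.gen 0 - (l ᵥ* M.rows) 3) := by
    simp only [potential, add_dotProduct, Pi.add_apply, dotProduct_vecMul_rows_gen]
    ring
  have h₀ : 0 ≤ l 0 := hl 0
  have h₁ : 0 ≤ l 1 := hl 1
  have h₂ : 0 ≤ l 2 := hl 2
  have hg := M.d₂₄_lt_gen_zero
  have := M.d₁₄_pos; have := M.d₂₁_pos; have := M.d₂₄_pos; have := M.d₃₁_pos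
  rw [Fin.sum_univ_three] at hl'
  rw [hpot, vecMul_rows]
  simp only [cons_val, c₄]
  nlinarith [mul_nonneg h₀ (by nlinarith : 0 ≤ M.d₂₁ * M.gen 0 - M.d₂₄ - 1),
    mul_nonneg h₁ (by nlinarith : 0 ≤ M.d₃₁ * M.gen 0 - 1)]

theorem exists_potential_lt {x : Fin 4 → ℤ} (hx : TailNonneg x) (hD : ¬ M.InDomain x) :
    ∃ l, TailNonneg (x + l ᵥ* M.rows) ∧ M.potential (x + l ᵥ* M.rows) < M.potential x := by
  have := M.d₂₄_pos; have := M.d₃₂_pos; have := M.d₄₂_pos; have := M.d₄₃_pos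
  obtain ⟨h₁, h₂, h₃⟩ := hx
  have hcases : M.c₂ ≤ x 1 ∨ M.c₃ ≤ x 2 ∨ M.c₄ ≤ x 3 ∨ M.d₁₄ ≤ x 3 ∧ M.d₁₃ ≤ x 2 ∨
      M.d₁₄ ≤ x 3 ∧ M.d₃₂ ≤ x 1 := by
    unfold InDomain at hD; omega
  simp only [c₂, c₃, c₄] at hcases
  obtain ⟨l, hl, hl', hmoved⟩ :
      ∃ l : Fin 3 → ℤ, 0 ≤ l ∧ 0 < ∑ i, l i ∧ TailNonneg (x + l ᵥ* M.rows) := by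
    rcases hcases with h | h | h | h | h <;>
      [use ![1, 0, 0]; use ![0, 1, 0]; use ![0, 0, 1]; use ![1, 1, 1]; use ![1, 0, 1]] <;>
      simp [Pi.le_def, Fin.forall_fin_succ, Fin.sum_univ_three, TailNonneg, vecMul_rows, c₂, c₃,
        c₄] <;>
      omega
  exact ⟨l, hmoved, M.potential_add_vecMul_rows_lt x hl hl'⟩

theorem exists_tailNonneg_add_vecMul_rows (x : Fin 4 → ℤ) :
    ∃ l, TailNonneg (x + l ᵥ* M.rows) := by
  have := M.d₁₃_pos; have := M.d₁₄_pos; have := M.d₂₄_pos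
  set w : Fin 3 → ℤ := ![-(M.d₂₄ + 2), -(M.d₂₄ + 1), -(M.d₂₄ + 1)]
  obtain ⟨hw₁, hw₂, hw₃⟩ :
      1 ≤ (w ᵥ* M.rows) 1 ∧ 1 ≤ (w ᵥ* M.rows) 2 ∧ 1 ≤ (w ᵥ* M.rows) 3 := by
    simp only [w, vecMul_rows, c₂, c₃, c₄, cons_val]
    refine ⟨by nlinarith [M.d₃₂_pos, M.d₄₂_pos], by nlinarith, by nlinarith⟩
  set t := |x 1| + |x 2| + |x 3|
  have := neg_abs_le (x 1); have := neg_abs_le (x 2); have := neg_abs_le (x 3)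
  have := abs_nonneg (x 1); have := abs_nonneg (x 2); have := abs_nonneg (x 3)
  refine ⟨t • w, ?_⟩
  simp only [TailNonneg, smul_vecMul, Pi.add_apply, Pi.smul_apply, smul_eq_mul]
  refine ⟨by nlinarith, by nlinarith, by nlinarith⟩

theorem exists_inDomain_add_vecMul_rows (x : Fin 4 → ℤ) :
    ∃ l, M.InDomain (x + l ᵥ* M.rows) := by
  obtain ⟨l₀, hl₀⟩ := M.exists_tailNonneg_add_vecMul_rows x
  suffices key : ∀ (n : ℕ) (y : Fin 4 → ℤ), TailNonneg y → (M.potential y).toNat = n →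
      ∃ l, M.InDomain (y + l ᵥ* M.rows) by
    obtain ⟨l, hl⟩ := key _ _ hl₀ rfl
    exact ⟨l₀ + l, by rwa [add_vecMul, ← add_assoc]⟩
  intro n
  induction n using Nat.strong_induction_on with
  | _ n ih =>
    intro y hy hn
    by_cases hD : M.InDomain y
    · exact ⟨0, by simpa using hD⟩
    obtain ⟨l, hl, hlt⟩ := M.exists_potential_lt hy hD
    obtain ⟨l', hl'⟩ := ih _ (by have := M.potential_nonneg hl; omega) _ hl rfl
    exact ⟨l + l', by rwa [add_vecMul, ← add_assoc]⟩

theorem nonpos_of_inDomain {x : Fin 4 → ℤ} {l : Fin 3 → ℤ} (hx : M.InDomain x)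
    (hy : TailNonneg (x + l ᵥ* M.rows)) : l 0 ≤ 0 ∧ l 1 ≤ 0 := by
  obtain ⟨hx₁, hx₁', hx₂, hx₂', hx₃, hx₃', hbox⟩ := hx
  obtain ⟨hy₁, hy₂, hy₃⟩ := hy
  have := M.d₁₃_pos; have := M.d₁₄_pos; have := M.d₂₄_pos; have := M.d₃₂_pos
  have := M.d₄₂_pos; have := M.d₄₃_pos
  simp only [vecMul_rows, c₂, c₃, c₄, Pi.add_apply, cons_val] at hy₁ hy₂ hy₃ hx₁' hx₂' hx₃'
  by_cases hl₀ : l 0 ≤ 0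
  · have hl₂ : l 2 < 1 := lt_of_mul_lt_mul_right (a := M.d₁₄ + M.d₂₄) (by nlinarith) (by omega)
    have hl₁ : l 1 < 1 := lt_of_mul_lt_mul_right (a := M.d₁₃ + M.d₄₃) (by nlinarith) (by omega)
    exact ⟨hl₀, by omega⟩
  exfalso
  rcases hbox with hb | ⟨hb₁, hb₂⟩
  · have hl₂ : l 2 < l 0 := lt_of_mul_lt_mul_right (a := M.d₁₄ + M.d₂₄) (by nlinarith) (by omega)
    have hl₁ : l 1 < l 0 := lt_of_mul_lt_mul_right (a := M.d₁₃ + M.d₄₃) (by nlinarith) (by omega)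
    nlinarith
  · have hl₂ : l 2 < l 0 + 1 :=
      lt_of_mul_lt_mul_right (a := M.d₁₄ + M.d₂₄) (by nlinarith) (by omega)
    have hl₁ : l 1 < l 0 := lt_of_mul_lt_mul_right (a := M.d₁₃ + M.d₄₃) (by nlinarith) (by omega)
    nlinarith

theorem exists_vecMul_rows_eq {u v : Fin 4 → ℤ} (hu : u ⬝ᵥ M.gen = 1) (hv : v ⬝ᵥ M.gen = 0) :
    ∃ l, l ᵥ* M.rows = v := by
  have hdet := Matrix.det_of_cons_eq_neg_dotProduct M.rows M.gen_eq_minor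
  exact Matrix.exists_vecMul_eq_of_det_cons_eq_zero M.rows (u := u)
    (by rw [hdet, hu]; exact isUnit_one.neg) (by rw [hdet, hv, neg_zero])

theorem mem_closure_iff_of_inDomain {u x : Fin 4 → ℤ} (hu : u ⬝ᵥ M.gen = 1)
    (hx : M.InDomain x) :
    x ⬝ᵥ M.gen ∈ AddSubmonoid.closure (Set.range M.gen) ↔ 0 ≤ x 0 := by
  rw [AddSubmonoid.mem_closure_range_iff_exists_dotProduct]
  constructor
  · rintro ⟨m, hm, hmx⟩
    obtain ⟨l, hl⟩ :=
      M.exists_vecMul_rows_eq hu (v := m - x) (by rw [sub_dotProduct, hmx, sub_self])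
    have hm' : m = x + l ᵥ* M.rows := by rw [hl]; abel
    obtain ⟨hl₀, hl₁⟩ := M.nonpos_of_inDomain hx (by rw [← hm']; exact ⟨hm 1, hm 2, hm 3⟩)
    have hm₀ : 0 ≤ m 0 := hm 0
    rw [hm', Pi.add_apply, vecMul_rows, cons_val_zero] at hm₀
    nlinarith [M.d₂₁_pos, M.d₃₁_pos]
  · intro hx₀
    obtain ⟨hx₁, -, hx₂, -, hx₃, -⟩ := hx
    exact ⟨x, fun i => by fin_cases i <;> assumption, rfl⟩

def frobenius : ℤ := (M.c₂ - 1) * M.gen 1 + (M.c₃ - 1) * M.gen 2 + (M.d₁₄ - 1) * M.gen 3 - M.gen 0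

theorem exists_inDomain_frobenius_sub {x : Fin 4 → ℤ} (hx : M.InDomain x) :
    ∃ y, M.InDomain y ∧ y 0 = -1 - x 0 ∧ y ⬝ᵥ M.gen = M.frobenius - x ⬝ᵥ M.gen := by
  have := M.d₁₄_pos; have := M.d₂₄_pos
  have := M.d₄₂_pos; have := M.d₄₃_pos
  obtain ⟨hx₁, hx₁', hx₂, hx₂', hx₃, hx₃', hbox⟩ := hx
  by_cases h : x 3 < M.d₁₄
  · refine ⟨![-1 - x 0, M.c₂ - 1 - x 1, M.c₃ - 1 - x 2, M.d₁₄ - 1 - x 3], ?_, rfl, ?_⟩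
    · simp only [InDomain, c₂, c₃, c₄, cons_val] at hx₁' hx₂' hx₃' ⊢
      omega
    · simp only [dotProduct_gen, frobenius, cons_val]
      ring
  · refine ⟨![-1 - x 0, M.d₃₂ - 1 - x 1, M.d₁₃ - 1 - x 2, M.c₄ + M.d₁₄ - 1 - x 3], ?_, rfl, ?_⟩
    · simp only [InDomain, c₂, c₃, c₄, cons_val] at hx₁' hx₂' hx₃' ⊢
      omega
    · rw [dotProduct_gen, dotProduct_gen]
      simp only [frobenius, gen, c₁, c₂, c₃, c₄, cons_val]
      ring

theorem mem_closure_iff_frobenius_sub_notMem {u : Fin 4 → ℤ} (hu : u ⬝ᵥ M.gen = 1) (z : ℤ) :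
    z ∈ AddSubmonoid.closure (Set.range M.gen) ↔
      M.frobenius - z ∉ AddSubmonoid.closure (Set.range M.gen) := by
  obtain ⟨l, hl⟩ := M.exists_inDomain_add_vecMul_rows (z • u)
  have hz : (z • u + l ᵥ* M.rows) ⬝ᵥ M.gen = z := by
    rw [add_dotProduct, smul_dotProduct, hu, M.dotProduct_vecMul_rows_gen, smul_eq_mul, mul_one,
      add_zero]
  obtain ⟨y, hy, hy₀, hyz⟩ := M.exists_inDomain_frobenius_sub hl
  rw [← hz, M.mem_closure_iff_of_inDomain hu hl, ← hyz, M.mem_closure_iff_of_inDomain hu hy, hy₀]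
  omega

end BresinskyMatrix

theorem stmt_4_general
    (c₁ c₂ c₃ c₄ d₁₃ d₁₄ d₂₁ d₂₄ d₃₁ d₃₂ d₄₂ d₄₃ : ℕ)
    (hd₁₃ : 0 < d₁₃) (hd₁₄ : 0 < d₁₄) (hd₂₁ : 0 < d₂₁) (hd₂₄ : 0 < d₂₄)
    (hd₃₁ : 0 < d₃₁) (hd₃₂ : 0 < d₃₂) (hd₄₂ : 0 < d₄₂) (hd₄₃ : 0 < d₄₃)
    (hcol₂ : c₂ = d₃₂ + d₄₂)
    (hcol₃ : c₃ = d₁₃ + d₄₃) (hcol₄ : c₄ = d₁₄ + d₂₄)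
    (A : Matrix (Fin 4) (Fin 4) ℤ)
    (hA : A = !![-(c₁ : ℤ), 0, (d₁₃ : ℤ), (d₁₄ : ℤ);
                 (d₂₁ : ℤ), -(c₂ : ℤ), 0, (d₂₄ : ℤ);
                 (d₃₁ : ℤ), (d₃₂ : ℤ), -(c₃ : ℤ), 0;
                 0, (d₄₂ : ℤ), (d₄₃ : ℤ), -(c₄ : ℤ)])
    (a : Fin 4 → ℤ)
    (ha : ∀ j : Fin 4, a j = (-1) ^ ((j : ℕ) + 1) *
        (A.submatrix (Fin.succAbove 0) (Fin.succAbove j)).det)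
    (hgcd : Finset.univ.gcd a = 1) :
    IsSymmetricNumericalSemigroup
      (AddSubmonoid.closure (Set.range fun j => (a j).toNat)) := by
  let M : BresinskyMatrix := ⟨d₁₃, d₁₄, d₂₁, d₂₄, d₃₁, d₃₂, d₄₂, d₄₃, by omega, by omega,
    by omega, by omega, by omega, by omega, by omega, by omega⟩
  have hrows : A.submatrix (Fin.succAbove 0) id = M.rows := by
    subst hA hcol₂ hcol₃ hcol₄
    ext i j
    fin_cases i <;> fin_cases j <;>
      simp [M, BresinskyMatrix.rows, BresinskyMatrix.c₂, BresinskyMatrix.c₃, BresinskyMatrix.c₄]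
  have hgen : a = M.gen := funext fun j => by rw [ha, M.gen_eq_minor, ← hrows]; rfl
  rw [hgen] at hgcd ⊢
  obtain ⟨u, hu⟩ := exists_dotProduct_eq_one_of_gcd_eq_one hgcd
  refine isSymmetricNumericalSemigroup_of_forall_iff _ M.frobenius
    ⟨1, AddSubmonoid.one_notMem_closure_of_two_le ?_⟩ fun z => ?_
  · rintro _ ⟨j, rfl⟩
    have := M.two_le_gen j
    dsimp only
    omega
  · simp only [exists_mem_closure_range_toNat_iff _ M.gen_nonneg]
    exact M.mem_closure_iff_frobenius_sub_notMem hu z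

/-- Bresinsky's criterion: the tuple of signed minors of such a matrix generates a
symmetric numerical semigroup (the curve is Gorenstein). -/
theorem stmt_4
    (c₁ c₂ c₃ c₄ d₁₃ d₁₄ d₂₁ d₂₄ d₃₁ d₃₂ d₄₂ d₄₃ : ℕ)
    (hc₁ : 2 ≤ c₁) (hc₂ : 2 ≤ c₂) (hc₃ : 2 ≤ c₃) (hc₄ : 2 ≤ c₄)
    (hd₁₃ : 0 < d₁₃) (hd₁₄ : 0 < d₁₄) (hd₂₁ : 0 < d₂₁) (hd₂₄ : 0 < d₂₄)
    (hd₃₁ : 0 < d₃₁) (hd₃₂ : 0 < d₃₂) (hd₄₂ : 0 < d₄₂) (hd₄₃ : 0 < d₄₃)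
    (hcol₁ : c₁ = d₂₁ + d₃₁) (hcol₂ : c₂ = d₃₂ + d₄₂)
    (hcol₃ : c₃ = d₁₃ + d₄₃) (hcol₄ : c₄ = d₁₄ + d₂₄)
    (A : Matrix (Fin 4) (Fin 4) ℤ)
    (hA : A = !![-(c₁ : ℤ), 0, (d₁₃ : ℤ), (d₁₄ : ℤ);
                 (d₂₁ : ℤ), -(c₂ : ℤ), 0, (d₂₄ : ℤ);
                 (d₃₁ : ℤ), (d₃₂ : ℤ), -(c₃ : ℤ), 0;
                 0, (d₄₂ : ℤ), (d₄₃ : ℤ), -(c₄ : ℤ)])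
    (a : Fin 4 → ℤ)
    (ha : ∀ j : Fin 4, a j = (-1) ^ ((j : ℕ) + 1) *
        (A.submatrix (Fin.succAbove 0) (Fin.succAbove j)).det)
    (hgcd : Finset.univ.gcd a = 1) :
    IsSymmetricNumericalSemigroup
      (AddSubmonoid.closure (Set.range fun j => (a j).toNat)) :=
  stmt_4_general c₁ c₂ c₃ c₄ d₁₃ d₁₄ d₂₁ d₂₄ d₃₁ d₃₂ d₄₂ d₄₃ hd₁₃ hd₁₄ hd₂₁ hd₂₄ hd₃₁ hd₃₂ hd₄₂ hd₄₃
    hcol₂ hcol₃ hcol₄ A hA a ha hgcd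
end

section
/- With A and a₁, a₂, a₃, a₄ as in the context, assume gcd(a₁, a₂, a₃, a₄) = 1. Suppose b₁₁ is a positive integer and b₁₂, b₁₃, b₁₄ are nonnegative integers with b₁₁·a₁ = b₁₂·a₂ + b₁₃·a₃ + b₁₄·a₄. Then there exist positive integers x₂, x₃, x₄ such that the row vector (1, x₂, x₃, x₄) multiplied on the left of the matrix M — where M is A with its first row replaced by (−b₁₁, b₁₂, b₁₃, b₁₄) — is zero; consequently b₁₁ = x₂·d₂₁ + x₃·d₃₁ ≥ d₂₁ + d₃₁ = c₁. -/
/-!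
The relation says that the cofactor vector `a` of the first row of `A` is orthogonal to the new
first row `r` of `M`, i.e. `det M = 0` by Laplace expansion along that row. Hence every row
combination `u ⬝ adj M` lies in the left kernel of `M`. Its first entry is `-∑ uⱼ aⱼ`, so a
Bézout combination for `gcd a = 1` gives, after a sign change, an integral left-kernel vector
`(1, x₂, x₃, x₄)`.

Its positivity is a minimum principle: columns 2–4 of `x ⬝ M = 0` say that
`cⱼ xⱼ = b₁ⱼ + ∑ dᵢⱼ xᵢ` with `b₁ⱼ ≥ 0`, so the minimum of `x₂, x₃, x₄` cannot be negative,
and a zero entry would spread along the cycle `2 → 3 → 4 → 2`, forcing `b₁₁ = x₂ d₂₁ + x₃ d₃₁ = 0`.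
-/

section FlowBalance

variable {R : Type*} [CommRing R] [LinearOrder R] [IsStrictOrderedRing R]
  {x₂ x₃ x₄ b₁₂ b₁₃ b₁₄ d₁₃ d₁₄ d₂₄ d₃₂ d₄₂ d₄₃ : R}

theorem nonneg_of_flow_balance (hd₁₃ : 0 < d₁₃) (hd₁₄ : 0 < d₁₄) (hd₂₄ : 0 ≤ d₂₄)
    (hd₃₂ : 0 < d₃₂) (hd₄₂ : 0 ≤ d₄₂) (hd₄₃ : 0 ≤ d₄₃)
    (hb₁₂ : 0 ≤ b₁₂) (hb₁₃ : 0 ≤ b₁₃) (hb₁₄ : 0 ≤ b₁₄)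
    (h₂ : x₂ * (d₃₂ + d₄₂) = b₁₂ + x₃ * d₃₂ + x₄ * d₄₂)
    (h₃ : x₃ * (d₁₃ + d₄₃) = b₁₃ + x₄ * d₄₃)
    (h₄ : x₄ * (d₁₄ + d₂₄) = b₁₄ + x₂ * d₂₄) :
    0 ≤ x₂ ∧ 0 ≤ x₃ ∧ 0 ≤ x₄ := by
  have h₂_ge : min x₃ x₄ ≤ x₂ := by
    by_contra! hlt
    have : 0 < (x₃ - x₂) * d₃₂ := mul_pos (by linarith [min_le_left x₃ x₄]) hd₃₂
    have : 0 ≤ (x₄ - x₂) * d₄₂ := mul_nonneg (by linarith [min_le_right x₃ x₄]) hd₄₂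
    linarith
  suffices 0 ≤ min x₃ x₄ by
    exact ⟨this.trans h₂_ge, this.trans (min_le_left _ _), this.trans (min_le_right _ _)⟩
  rcases le_total x₃ x₄ with h | h
  · rw [min_eq_left h]
    have : 0 ≤ (x₄ - x₃) * d₄₃ := mul_nonneg (by linarith) hd₄₃
    exact nonneg_of_mul_nonneg_left (by linarith) hd₁₃
  · rw [min_eq_right h] at h₂_ge ⊢
    have : 0 ≤ (x₂ - x₄) * d₂₄ := mul_nonneg (by linarith) hd₂₄
    exact nonneg_of_mul_nonneg_left (by linarith) hd₁₄

theorem eq_zero_or_pos_of_flow_balance (hd₁₃ : 0 < d₁₃) (hd₁₄ : 0 < d₁₄) (hd₂₄ : 0 < d₂₄)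
    (hd₃₂ : 0 < d₃₂) (hd₄₂ : 0 ≤ d₄₂) (hd₄₃ : 0 < d₄₃)
    (hb₁₂ : 0 ≤ b₁₂) (hb₁₃ : 0 ≤ b₁₃) (hb₁₄ : 0 ≤ b₁₄)
    (h₂ : x₂ * (d₃₂ + d₄₂) = b₁₂ + x₃ * d₃₂ + x₄ * d₄₂)
    (h₃ : x₃ * (d₁₃ + d₄₃) = b₁₃ + x₄ * d₄₃)
    (h₄ : x₄ * (d₁₄ + d₂₄) = b₁₄ + x₂ * d₂₄) :
    (x₂ = 0 ∧ x₃ = 0 ∧ x₄ = 0) ∨ (0 < x₂ ∧ 0 < x₃ ∧ 0 < x₄) := by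
  obtain ⟨hx₂, hx₃, hx₄⟩ := nonneg_of_flow_balance hd₁₃ hd₁₄ hd₂₄.le hd₃₂ hd₄₂ hd₄₃.le
    hb₁₂ hb₁₃ hb₁₄ h₂ h₃ h₄
  have h₂₃ : x₂ = 0 → x₃ = 0 := fun h ↦ by
    subst h
    exact le_antisymm (nonpos_of_mul_nonpos_left (by nlinarith) hd₃₂) hx₃
  have h₃₄ : x₃ = 0 → x₄ = 0 := fun h ↦ by
    subst h
    exact le_antisymm (nonpos_of_mul_nonpos_left (by nlinarith) hd₄₃) hx₄
  have h₄₂ : x₄ = 0 → x₂ = 0 := fun h ↦ by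
    subst h
    exact le_antisymm (nonpos_of_mul_nonpos_left (by nlinarith) hd₂₄) hx₂
  by_cases hz : x₂ = 0 ∨ x₃ = 0 ∨ x₄ = 0
  · left
    rcases hz with h | h | h
    exacts [⟨h, h₂₃ h, h₃₄ (h₂₃ h)⟩, ⟨h₄₂ (h₃₄ h), h, h₃₄ h⟩, ⟨h₄₂ h, h₂₃ (h₄₂ h), h⟩]
  · right
    simp only [not_or] at hz
    exact ⟨hx₂.lt_of_ne' hz.1, hx₃.lt_of_ne' hz.2.1, hx₄.lt_of_ne' hz.2.2⟩

end FlowBalance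

namespace Matrix

variable {R : Type*} [CommRing R]

theorem vecMul_vecMul_adjugate_of_det_eq_zero {ι : Type*} [Fintype ι] [DecidableEq ι]
    {M : Matrix ι ι R} (hM : M.det = 0) (u : ι → R) : u ᵥ* M.adjugate ᵥ* M = 0 := by
  rw [vecMul_vecMul, adjugate_mul, hM, zero_smul, vecMul_zero]

section UpdateRowZero

variable {n : ℕ} {A : Matrix (Fin (n + 1)) (Fin (n + 1)) R} {a : Fin (n + 1) → R}

theorem det_updateRow_zero_eq_neg_sum
    (ha : ∀ j : Fin (n + 1), a j = (-1) ^ ((j : ℕ) + 1) *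
      (A.submatrix (Fin.succAbove 0) (Fin.succAbove j)).det) (r : Fin (n + 1) → R) :
    (A.updateRow 0 r).det = -∑ j, a j * r j := by
  rw [det_succ_row_zero, ← Finset.sum_neg_distrib]
  refine Finset.sum_congr rfl fun j _ => ?_
  rw [ha, updateRow_self, ← Fin.succAbove_zero, submatrix_updateRow_succAbove]
  ring

theorem adjugate_updateRow_zero_apply_zero
    (ha : ∀ j : Fin (n + 1), a j = (-1) ^ ((j : ℕ) + 1) *
      (A.submatrix (Fin.succAbove 0) (Fin.succAbove j)).det) (r : Fin (n + 1) → R)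
    (k : Fin (n + 1)) : (A.updateRow 0 r).adjugate k 0 = -a k := by
  rw [adjugate_fin_succ_eq_det_submatrix, submatrix_updateRow_succAbove, ha]
  simp only [Fin.val_zero, pow_succ]
  ring

theorem exists_vecMul_updateRow_zero_eq_zero
    (ha : ∀ j : Fin (n + 1), a j = (-1) ^ ((j : ℕ) + 1) *
      (A.submatrix (Fin.succAbove 0) (Fin.succAbove j)).det) {r u : Fin (n + 1) → R}
    (hr : ∑ j, a j * r j = 0) (hu : ∑ j, a j * u j = 1) :
    ∃ x : Fin (n + 1) → R, x 0 = 1 ∧ x ᵥ* A.updateRow 0 r = 0 := by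
  refine ⟨-(u ᵥ* (A.updateRow 0 r).adjugate), ?_, ?_⟩
  · simpa [vecMul, dotProduct, adjugate_updateRow_zero_apply_zero ha, mul_comm] using hu
  · rw [neg_vecMul, vecMul_vecMul_adjugate_of_det_eq_zero, neg_zero]
    rw [det_updateRow_zero_eq_neg_sum ha, hr, neg_zero]

end UpdateRowZero

end Matrix

theorem stmt_5_general
    (c₁ c₂ c₃ c₄ d₁₃ d₁₄ d₂₁ d₂₄ d₃₁ d₃₂ d₄₂ d₄₃ : ℕ)
    (hd₁₃ : 0 < d₁₃) (hd₁₄ : 0 < d₁₄) (hd₂₄ : 0 < d₂₄)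
    (hd₃₂ : 0 < d₃₂) (hd₄₃ : 0 < d₄₃)
    (hcol₁ : c₁ = d₂₁ + d₃₁) (hcol₂ : c₂ = d₃₂ + d₄₂)
    (hcol₃ : c₃ = d₁₃ + d₄₃) (hcol₄ : c₄ = d₁₄ + d₂₄)
    (A : Matrix (Fin 4) (Fin 4) ℤ)
    (hA : A = !![-(c₁ : ℤ), 0, (d₁₃ : ℤ), (d₁₄ : ℤ);
                 (d₂₁ : ℤ), -(c₂ : ℤ), 0, (d₂₄ : ℤ);
                 (d₃₁ : ℤ), (d₃₂ : ℤ), -(c₃ : ℤ), 0;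
                 0, (d₄₂ : ℤ), (d₄₃ : ℤ), -(c₄ : ℤ)])
    (a : Fin 4 → ℤ)
    (ha : ∀ j : Fin 4, a j = (-1) ^ ((j : ℕ) + 1) *
        (A.submatrix (Fin.succAbove 0) (Fin.succAbove j)).det)
    (hgcd : Finset.univ.gcd a = 1)
    (b₁₁ b₁₂ b₁₃ b₁₄ : ℤ)
    (hb₁₁ : 0 < b₁₁) (hb₁₂ : 0 ≤ b₁₂) (hb₁₃ : 0 ≤ b₁₃) (hb₁₄ : 0 ≤ b₁₄)
    (hrel : b₁₁ * a 0 = b₁₂ * a 1 + b₁₃ * a 2 + b₁₄ * a 3)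
    (M : Matrix (Fin 4) (Fin 4) ℤ)
    (hM : M = A.updateRow 0 ![-b₁₁, b₁₂, b₁₃, b₁₄]) :
    ∃ x₂ x₃ x₄ : ℤ, 0 < x₂ ∧ 0 < x₃ ∧ 0 < x₄ ∧
      Matrix.vecMul ![1, x₂, x₃, x₄] M = 0 ∧
      b₁₁ = x₂ * d₂₁ + x₃ * d₃₁ ∧ (c₁ : ℤ) ≤ b₁₁ := by
  subst hA hM hcol₁ hcol₂ hcol₃ hcol₄
  obtain ⟨u, hu⟩ := Finset.univ.gcd_eq_sum_mul a
  have hr : ∑ j, a j * ![-b₁₁, b₁₂, b₁₃, b₁₄] j = 0 := by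
    simp only [Fin.sum_univ_four, Matrix.cons_val_zero, Matrix.cons_val_one, Matrix.cons_val]
    linarith
  obtain ⟨x, hx₀, hx⟩ := Matrix.exists_vecMul_updateRow_zero_eq_zero ha hr (hu ▸ hgcd)
  have E₁ := congrFun hx 0
  have E₂ := congrFun hx 1
  have E₃ := congrFun hx 2
  have E₄ := congrFun hx 3
  simp only [Matrix.vecMul, dotProduct, Nat.reduceAdd, Nat.cast_add, neg_add_rev, Fin.isValue,
    Nat.succ_eq_add_one, Fin.sum_univ_four, hx₀, Matrix.updateRow_self, Matrix.cons_val_zero,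
    mul_neg, one_mul, ne_eq, one_ne_zero, not_false_eq_true, Matrix.updateRow_ne, Matrix.of_apply,
    Matrix.cons_val', Matrix.cons_val_fin_one, Matrix.cons_val_one, Fin.reduceEq, Matrix.cons_val,
    mul_zero, add_zero, Pi.zero_apply] at E₁ E₂ E₃ E₄
  obtain ⟨hx₂, hx₃, -⟩ | ⟨hx₂, hx₃, hx₄⟩ :=
    eq_zero_or_pos_of_flow_balance (x₂ := x 1) (x₃ := x 2) (x₄ := x 3)
      (Int.natCast_pos.mpr hd₁₃) (Int.natCast_pos.mpr hd₁₄) (Int.natCast_pos.mpr hd₂₄)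
      (Int.natCast_pos.mpr hd₃₂) (Int.natCast_nonneg d₄₂) (Int.natCast_pos.mpr hd₄₃)
      hb₁₂ hb₁₃ hb₁₄ (by linear_combination -E₂) (by linear_combination -E₃)
      (by linear_combination -E₄)
  · rw [hx₂, hx₃] at E₁
    linarith
  have hx_eq : ![1, x 1, x 2, x 3] = x := by
    ext j
    fin_cases j <;> simp [hx₀]
  refine ⟨x 1, x 2, x 3, hx₂, hx₃, hx₄, hx_eq ▸ hx, by linarith, ?_⟩
  push_cast
  nlinarith

/-- Any relation of the first entry dominates the principal one: `b₁₁ ≥ c₁`. -/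
theorem stmt_5
    (c₁ c₂ c₃ c₄ d₁₃ d₁₄ d₂₁ d₂₄ d₃₁ d₃₂ d₄₂ d₄₃ : ℕ)
    (hc₁ : 2 ≤ c₁) (hc₂ : 2 ≤ c₂) (hc₃ : 2 ≤ c₃) (hc₄ : 2 ≤ c₄)
    (hd₁₃ : 0 < d₁₃) (hd₁₄ : 0 < d₁₄) (hd₂₁ : 0 < d₂₁) (hd₂₄ : 0 < d₂₄)
    (hd₃₁ : 0 < d₃₁) (hd₃₂ : 0 < d₃₂) (hd₄₂ : 0 < d₄₂) (hd₄₃ : 0 < d₄₃)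
    (hcol₁ : c₁ = d₂₁ + d₃₁) (hcol₂ : c₂ = d₃₂ + d₄₂)
    (hcol₃ : c₃ = d₁₃ + d₄₃) (hcol₄ : c₄ = d₁₄ + d₂₄)
    (A : Matrix (Fin 4) (Fin 4) ℤ)
    (hA : A = !![-(c₁ : ℤ), 0, (d₁₃ : ℤ), (d₁₄ : ℤ);
                 (d₂₁ : ℤ), -(c₂ : ℤ), 0, (d₂₄ : ℤ);
                 (d₃₁ : ℤ), (d₃₂ : ℤ), -(c₃ : ℤ), 0;
                 0, (d₄₂ : ℤ), (d₄₃ : ℤ), -(c₄ : ℤ)])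
    (a : Fin 4 → ℤ)
    (ha : ∀ j : Fin 4, a j = (-1) ^ ((j : ℕ) + 1) *
        (A.submatrix (Fin.succAbove 0) (Fin.succAbove j)).det)
    (hgcd : Finset.univ.gcd a = 1)
    (b₁₁ b₁₂ b₁₃ b₁₄ : ℤ)
    (hb₁₁ : 0 < b₁₁) (hb₁₂ : 0 ≤ b₁₂) (hb₁₃ : 0 ≤ b₁₃) (hb₁₄ : 0 ≤ b₁₄)
    (hrel : b₁₁ * a 0 = b₁₂ * a 1 + b₁₃ * a 2 + b₁₄ * a 3)
    (M : Matrix (Fin 4) (Fin 4) ℤ)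
    (hM : M = A.updateRow 0 ![-b₁₁, b₁₂, b₁₃, b₁₄]) :
    ∃ x₂ x₃ x₄ : ℤ, 0 < x₂ ∧ 0 < x₃ ∧ 0 < x₄ ∧
      Matrix.vecMul ![1, x₂, x₃, x₄] M = 0 ∧
      b₁₁ = x₂ * d₂₁ + x₃ * d₃₁ ∧ (c₁ : ℤ) ≤ b₁₁ :=
  stmt_5_general c₁ c₂ c₃ c₄ d₁₃ d₁₄ d₂₁ d₂₄ d₃₁ d₃₂ d₄₂ d₄₃ hd₁₃ hd₁₄ hd₂₄ hd₃₂ hd₄₃ hcol₁ hcol₂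
    hcol₃ hcol₄ A hA a ha hgcd b₁₁ b₁₂ b₁₃ b₁₄ hb₁₁ hb₁₂ hb₁₃ hb₁₄ hrel M hM
end

section
/- With A, a = (a₁, a₂, a₃, a₄), u, and A_t as in the context: u₁ = u₃, each column of A_t sums to zero for every t, and for every integer t ≥ 0 one has A_t·(a + t·u)ᵀ = 0, i.e. the rows of A_t are relations of the translated sequence a + t·u. -/
/-!
Both `a` and `u` are generalized cross products: `a` of rows 2, 3, 4 of `A`, and `u` of rows 2
and 4 of `A` together with `e = e₁ - e₃` (the middle row of `U`). A Laplace expansion with a repeated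
row makes each orthogonal to the rows it is built from; then `A₁ ⬝ a = 0` too, as the rows of `A`
sum to zero, and `e ⬝ u = 0` is `u₁ = u₃`. Since `A_t = A + t E` with `E` having rows
`-e, 0, e, 0`, expanding `A_t (a + t u)` leaves the single relation `A₁ ⬝ u = e ⬝ a`. Up to the same
sign, both sides are the determinant of `A` with one row (row 3, resp. row 1) replaced by `e`. When
the rows of a square matrix sum to zero, replacing different rows by the same vector gives the same
determinant.
-/

open Finset Matrix

namespace Matrix

variable {R : Type*} [CommRing R]

def crossVec {n : ℕ} (M : Matrix (Fin n) (Fin (n + 1)) R) : Fin (n + 1) → R :=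
  fun j => (-1) ^ ((j : ℕ) + 1) * (M.submatrix id j.succAbove).det

theorem dotProduct_crossVec {n : ℕ} (M : Matrix (Fin n) (Fin (n + 1)) R) (v : Fin (n + 1) → R) :
    v ⬝ᵥ M.crossVec = -(of (Fin.cons v M : Fin (n + 1) → Fin (n + 1) → R)).det := by
  rw [det_succ_row_zero, ← sum_neg_distrib]
  refine sum_congr rfl fun j _ => ?_
  change v j * ((-1) ^ ((j : ℕ) + 1) * (M.submatrix id j.succAbove).det) =
    -((-1) ^ (j : ℕ) * v j * (M.submatrix id j.succAbove).det)
  ring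

theorem row_dotProduct_crossVec {n : ℕ} (M : Matrix (Fin n) (Fin (n + 1)) R) (i : Fin n) :
    M i ⬝ᵥ M.crossVec = 0 := by
  rw [dotProduct_crossVec, neg_eq_zero]
  exact det_zero_of_row_eq (Fin.succ_ne_zero i).symm rfl

theorem dotProduct_crossVec_submatrix_succ {n : ℕ} (A : Matrix (Fin (n + 1)) (Fin (n + 1)) R)
    (v : Fin (n + 1) → R) :
    v ⬝ᵥ (A.submatrix Fin.succ id).crossVec = -(A.updateRow 0 v).det := by
  rw [dotProduct_crossVec]
  congr 2
  ext i j
  refine Fin.cases ?_ (fun i => ?_) i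
  · rfl
  · exact congrFun (updateRow_ne (M := A) (b := v) (Fin.succ_ne_zero i)).symm j

section ColSumsZero

variable {n : Type*} [Fintype n] [DecidableEq n] {M : Matrix n n R}

theorem sum_updateRow_of_col_sums_eq_zero (hM : ∀ j, ∑ i, M i j = 0) (v : n → R) (i : n) :
    ∑ l, M.updateRow i v l = v - M i := by
  have hsum := sum_update_of_mem (mem_univ i) (fun l => M l) v
  have hi := add_sum_erase univ (fun l => M l) (mem_univ i)
  rw [show ∑ l, M l = 0 from funext fun j => (Finset.sum_apply j _ _).trans (hM j)] at hi
  rw [sdiff_singleton_eq_erase, eq_neg_of_add_eq_zero_right hi, ← sub_eq_add_neg] at hsum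
  exact hsum

/-- Adding all other rows to row `k` of `M.updateRow i v` turns it into `v - M i`; the `v` part
has a repeated row, and the `- M i` part is `M.updateRow k v` with rows `i` and `k` swapped. -/
theorem det_updateRow_eq_of_col_sums_eq_zero (hM : ∀ j, ∑ i, M i j = 0) (v : n → R) (i k : n) :
    (M.updateRow i v).det = (M.updateRow k v).det := by
  rcases eq_or_ne i k with rfl | hik
  · rfl
  set N := M.updateRow i v
  have hrep : (N.updateRow k v).det = 0 := by
    simpa [N] using det_updateRow_eq_zero (M := N) hik
  have hswap : N.updateRow k (M i) = (M.updateRow k v).submatrix (Equiv.swap i k) id := by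
    ext l j
    rcases eq_or_ne l i with rfl | hl
    · simp [N, hik, updateRow_apply]
    rcases eq_or_ne l k with rfl | hl'
    · simp [N, hik, updateRow_apply]
    · simp [N, hl, hl', updateRow_apply, Equiv.swap_apply_of_ne_of_ne hl hl']
  calc N.det = (N.updateRow k (∑ l, (1 : R) • N l)).det := by
        rw [det_updateRow_sum, one_smul]
    _ = (N.updateRow k v).det - (N.updateRow k (M i)).det := by
        simp only [one_smul, N, sum_updateRow_of_col_sums_eq_zero hM, sub_eq_add_neg,
          det_updateRow_add, ← neg_one_smul R (M i), det_updateRow_smul]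
        ring
    _ = (M.updateRow k v).det := by
        rw [hrep, hswap, det_permute, Equiv.Perm.sign_swap hik]
        simp

end ColSumsZero

theorem dotProduct_crossVec_updateRow_of_col_sums_eq_zero {n : ℕ}
    {A : Matrix (Fin (n + 1)) (Fin (n + 1)) R} (hA : ∀ j, ∑ i, A i j = 0) (v : Fin (n + 1) → R)
    {k : Fin (n + 1)} (hk : k ≠ 0) :
    A 0 ⬝ᵥ ((A.updateRow k v).submatrix Fin.succ id).crossVec =
      v ⬝ᵥ (A.submatrix Fin.succ id).crossVec := by
  rw [dotProduct_crossVec_submatrix_succ, dotProduct_crossVec_submatrix_succ,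
    det_updateRow_eq_of_col_sums_eq_zero hA v 0 k, ← updateRow_ne (M := A) (b := v) hk.symm,
    updateRow_eq_self]

end Matrix

theorem stmt_6_general
    (c₁ c₂ c₃ c₄ d₁₃ d₁₄ d₂₁ d₂₄ d₃₁ d₃₂ d₄₂ d₄₃ : ℕ)
    (hcol₁ : c₁ = d₂₁ + d₃₁) (hcol₂ : c₂ = d₃₂ + d₄₂)
    (hcol₃ : c₃ = d₁₃ + d₄₃) (hcol₄ : c₄ = d₁₄ + d₂₄)
    (A : Matrix (Fin 4) (Fin 4) ℤ)
    (hA : A = !![-(c₁ : ℤ), 0, (d₁₃ : ℤ), (d₁₄ : ℤ);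
                 (d₂₁ : ℤ), -(c₂ : ℤ), 0, (d₂₄ : ℤ);
                 (d₃₁ : ℤ), (d₃₂ : ℤ), -(c₃ : ℤ), 0;
                 0, (d₄₂ : ℤ), (d₄₃ : ℤ), -(c₄ : ℤ)])
    (a : Fin 4 → ℤ)
    (ha : ∀ j : Fin 4, a j = (-1) ^ ((j : ℕ) + 1) *
        (A.submatrix (Fin.succAbove 0) (Fin.succAbove j)).det)
    (U : Matrix (Fin 3) (Fin 4) ℤ)
    (hU : U = !![(d₂₁ : ℤ), -(c₂ : ℤ), 0, (d₂₄ : ℤ);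
                 1, 0, -1, 0;
                 0, (d₄₂ : ℤ), (d₄₃ : ℤ), -(c₄ : ℤ)])
    (u : Fin 4 → ℤ)
    (hu : ∀ j : Fin 4, u j = (-1) ^ ((j : ℕ) + 1) *
        (U.submatrix id (Fin.succAbove j)).det)
    (At : ℤ → Matrix (Fin 4) (Fin 4) ℤ)
    (hAt : ∀ t : ℤ, At t = !![-(c₁ : ℤ) - t, 0, (d₁₃ : ℤ) + t, (d₁₄ : ℤ);
                 (d₂₁ : ℤ), -(c₂ : ℤ), 0, (d₂₄ : ℤ);
                 (d₃₁ : ℤ) + t, (d₃₂ : ℤ), -(c₃ : ℤ) - t, 0;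
                 0, (d₄₂ : ℤ), (d₄₃ : ℤ), -(c₄ : ℤ)])
    :
    u 0 = u 2 ∧
    (∀ t : ℤ, ∀ j : Fin 4, ∑ i : Fin 4, At t i j = 0) ∧
    (∀ t : ℤ, 0 ≤ t → (At t).mulVec (fun j => a j + t * u j) = 0) := by
  subst hcol₁ hcol₂ hcol₃ hcol₄
  have hcols : ∀ j, ∑ i, A i j = 0 := by
    intro j; fin_cases j <;> simp [hA, Fin.sum_univ_four]
  set e : Fin 4 → ℤ := ![1, 0, -1, 0]
  have ha' : a = (A.submatrix Fin.succ id).crossVec := by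
    funext j; rw [ha, Fin.succAbove_zero]; rfl
  have hu' : u = ((A.updateRow 2 e).submatrix Fin.succ id).crossVec := by
    subst hA hU; funext j; rw [hu]; congr; ext i k; fin_cases i <;> fin_cases k <;> rfl
  have hAa : ∀ i : Fin 3, A i.succ ⬝ᵥ a = 0 := ha' ▸ row_dotProduct_crossVec _
  have hUu : ∀ i, U i ⬝ᵥ u = 0 := (funext hu : u = U.crossVec) ▸ row_dotProduct_crossVec U
  have hA0u : A 0 ⬝ᵥ u = e ⬝ᵥ a := by
    rw [hu', ha']
    exact dotProduct_crossVec_updateRow_of_col_sums_eq_zero hcols e (by decide)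
  have hA1 := hAa 0
  have hA2 := hAa 1
  have hA3 := hAa 2
  have hU1 := hUu 0
  have hU2 := hUu 1
  have hU3 := hUu 2
  simp only [hA, hU, e, dotProduct, Fin.sum_univ_four, of_apply, cons_val', cons_val_fin_one,
    cons_val_zero, cons_val_one, Matrix.cons_val, Fin.succ_zero_eq_one, Fin.reduceSucc,
    Nat.cast_add] at hA1 hA2 hA3 hU1 hU2 hU3 hA0u
  refine ⟨by linear_combination hU2, fun t j => ?_, fun t _ => ?_⟩
  · fin_cases j <;> simp only [hAt, Fin.sum_univ_four, of_apply, cons_val', cons_val_fin_one,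
      cons_val_zero, cons_val_one, Matrix.cons_val, Fin.reduceFinMk, Nat.cast_add] <;> ring
  · ext i
    fin_cases i <;> simp only [hAt, mulVec, dotProduct, Fin.sum_univ_four, of_apply, cons_val',
      cons_val_fin_one, cons_val_zero, cons_val_one, Matrix.cons_val, Fin.reduceFinMk,
      Nat.cast_add, Pi.zero_apply]
    · linear_combination -(hA1 + hA2 + hA3) + t * hA0u - t ^ 2 * hU2
    · linear_combination hA1 + t * hU1
    · linear_combination hA2 - t * (hA0u + hU1 + hU3) + t ^ 2 * hU2
    · linear_combination hA3 + t * hU3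

/-- Properties of the translation vector `u` and the translated matrices `A_t`. -/
theorem stmt_6
    (c₁ c₂ c₃ c₄ d₁₃ d₁₄ d₂₁ d₂₄ d₃₁ d₃₂ d₄₂ d₄₃ : ℕ)
    (hc₁ : 2 ≤ c₁) (hc₂ : 2 ≤ c₂) (hc₃ : 2 ≤ c₃) (hc₄ : 2 ≤ c₄)
    (hd₁₃ : 0 < d₁₃) (hd₁₄ : 0 < d₁₄) (hd₂₁ : 0 < d₂₁) (hd₂₄ : 0 < d₂₄)
    (hd₃₁ : 0 < d₃₁) (hd₃₂ : 0 < d₃₂) (hd₄₂ : 0 < d₄₂) (hd₄₃ : 0 < d₄₃)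
    (hcol₁ : c₁ = d₂₁ + d₃₁) (hcol₂ : c₂ = d₃₂ + d₄₂)
    (hcol₃ : c₃ = d₁₃ + d₄₃) (hcol₄ : c₄ = d₁₄ + d₂₄)
    (A : Matrix (Fin 4) (Fin 4) ℤ)
    (hA : A = !![-(c₁ : ℤ), 0, (d₁₃ : ℤ), (d₁₄ : ℤ);
                 (d₂₁ : ℤ), -(c₂ : ℤ), 0, (d₂₄ : ℤ);
                 (d₃₁ : ℤ), (d₃₂ : ℤ), -(c₃ : ℤ), 0;
                 0, (d₄₂ : ℤ), (d₄₃ : ℤ), -(c₄ : ℤ)])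
    (a : Fin 4 → ℤ)
    (ha : ∀ j : Fin 4, a j = (-1) ^ ((j : ℕ) + 1) *
        (A.submatrix (Fin.succAbove 0) (Fin.succAbove j)).det)
    (U : Matrix (Fin 3) (Fin 4) ℤ)
    (hU : U = !![(d₂₁ : ℤ), -(c₂ : ℤ), 0, (d₂₄ : ℤ);
                 1, 0, -1, 0;
                 0, (d₄₂ : ℤ), (d₄₃ : ℤ), -(c₄ : ℤ)])
    (u : Fin 4 → ℤ)
    (hu : ∀ j : Fin 4, u j = (-1) ^ ((j : ℕ) + 1) *
        (U.submatrix id (Fin.succAbove j)).det)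
    (At : ℤ → Matrix (Fin 4) (Fin 4) ℤ)
    (hAt : ∀ t : ℤ, At t = !![-(c₁ : ℤ) - t, 0, (d₁₃ : ℤ) + t, (d₁₄ : ℤ);
                 (d₂₁ : ℤ), -(c₂ : ℤ), 0, (d₂₄ : ℤ);
                 (d₃₁ : ℤ) + t, (d₃₂ : ℤ), -(c₃ : ℤ) - t, 0;
                 0, (d₄₂ : ℤ), (d₄₃ : ℤ), -(c₄ : ℤ)])
    :
    u 0 = u 2 ∧
    (∀ t : ℤ, ∀ j : Fin 4, ∑ i : Fin 4, At t i j = 0) ∧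
    (∀ t : ℤ, 0 ≤ t → (At t).mulVec (fun j => a j + t * u j) = 0) :=
  stmt_6_general c₁ c₂ c₃ c₄ d₁₃ d₁₄ d₂₁ d₂₄ d₃₁ d₃₂ d₄₂ d₄₃ hcol₁ hcol₂ hcol₃ hcol₄ A hA a ha U hU
    u hu At hAt
end

section
/- With A as in the context, let a, x, y, z be positive integers and suppose A·(a, a+x, a+y, a+z)ᵀ = 0. If the entries of row 2 of A sum to zero (c₂ = d₂₁ + d₂₄), then c₂·x = d₂₄·z and consequently x < z. If moreover the entries of row 4 of A also sum to zero (c₄ = d₄₂ + d₄₃), then d₄₂·x + d₄₃·y = c₄·z, d₄₃·(y − z) = d₄₂·(z − x), and consequently x < z < y. -/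
/-!
A row of `A` with zero sum kills the constant vector, so the equations of rows 2 and 4 do not
see `a`: they read `c₂ x = d₂₄ z` and
`d₄₂ x + d₄₃ y = c₄ z`. Splitting `c₂ = d₂₁ + d₂₄` turns the first into
`d₂₄ (z - x) = d₂₁ x > 0`, and splitting `c₄ = d₄₂ + d₄₃` turns the second into
`d₄₃ (y - z) = d₄₂ (z - x) > 0`.
-/

open Matrix

theorem dotProduct_const_add_of_sum_eq_zero {n R : Type*} [Fintype n] [CommRing R]
    {r : n → R} (hr : ∑ i, r i = 0) (a : R) (v : n → R) :
    r ⬝ᵥ (Function.const n a + v) = r ⬝ᵥ v := by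
  have hconst : r ⬝ᵥ Function.const n a = 0 := by
    simp [dotProduct, ← Finset.sum_mul, hr]
  rw [dotProduct_add, hconst, zero_add]

theorem Matrix.dotProduct_eq_zero_of_mulVec_const_add_eq_zero {m n R : Type*} [Fintype n]
    [CommRing R] {M : Matrix m n R} {i : m} (hi : ∑ j, M i j = 0) {a : R} {v : n → R}
    (h : M *ᵥ (Function.const n a + v) = 0) : M i ⬝ᵥ v = 0 := by
  rw [← dotProduct_const_add_of_sum_eq_zero hi a]
  exact congrFun h i

theorem lt_of_mul_sub_eq_mul_pos {R : Type*} [CommRing R] [LinearOrder R]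
    [IsStrictOrderedRing R] {d e u v w : R} (hd : 0 ≤ d) (he : 0 < e) (hw : 0 < w)
    (h : d * (v - u) = e * w) : u < v :=
  sub_pos.1 (pos_of_mul_pos_right (h ▸ mul_pos he hw) hd)

theorem stmt_11_general
    (c₁ c₂ c₃ c₄ d₁₃ d₁₄ d₂₁ d₂₄ d₃₁ d₃₂ d₄₂ d₄₃ : ℕ)
    (hd₂₁ : 0 < d₂₁) (hd₄₂ : 0 < d₄₂)
    (A : Matrix (Fin 4) (Fin 4) ℤ)
    (hA : A = !![-(c₁ : ℤ), 0, (d₁₃ : ℤ), (d₁₄ : ℤ);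
                 (d₂₁ : ℤ), -(c₂ : ℤ), 0, (d₂₄ : ℤ);
                 (d₃₁ : ℤ), (d₃₂ : ℤ), -(c₃ : ℤ), 0;
                 0, (d₄₂ : ℤ), (d₄₃ : ℤ), -(c₄ : ℤ)])
    (a x y z : ℤ) (hxpos : 0 < x)
    (hrel : A.mulVec ![a, a + x, a + y, a + z] = 0) :
    (c₂ = d₂₁ + d₂₄ → (c₂ : ℤ) * x = (d₂₄ : ℤ) * z ∧ x < z) ∧
    (c₂ = d₂₁ + d₂₄ → c₄ = d₄₂ + d₄₃ →
      (d₄₂ : ℤ) * x + (d₄₃ : ℤ) * y = (c₄ : ℤ) * z ∧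
      (d₄₃ : ℤ) * (y - z) = (d₄₂ : ℤ) * (z - x) ∧
      x < z ∧ z < y) := by
  have hshift : ![a, a + x, a + y, a + z] = Function.const _ a + ![0, x, y, z] := by
    ext i; fin_cases i <;> simp
  rw [hshift] at hrel
  subst hA
  have row₂ (h₂ : c₂ = d₂₁ + d₂₄) : (c₂ : ℤ) * x = d₂₄ * z := by
    have : -(c₂ : ℤ) * x + d₂₄ * z = 0 := by
      simpa [dotProduct, Fin.sum_univ_four] using
        dotProduct_eq_zero_of_mulVec_const_add_eq_zero (i := 1)
          (by simp [Fin.sum_univ_four, h₂]) hrel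
    linarith
  have row₄ (h₄ : c₄ = d₄₂ + d₄₃) : (d₄₂ : ℤ) * x + d₄₃ * y = c₄ * z := by
    have : (d₄₂ : ℤ) * x + d₄₃ * y - c₄ * z = 0 := by
      simpa [dotProduct, Fin.sum_univ_four, sub_eq_add_neg] using
        dotProduct_eq_zero_of_mulVec_const_add_eq_zero (i := 3)
          (by simp [Fin.sum_univ_four, h₄]) hrel
    linarith
  have x_lt_z (h₂ : c₂ = d₂₁ + d₂₄) : x < z := by
    have := row₂ h₂
    push_cast [h₂] at this
    exact lt_of_mul_sub_eq_mul_pos (Int.natCast_nonneg d₂₄) (Int.natCast_pos.2 hd₂₁) hxpos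
      (by linear_combination -this)
  refine ⟨fun h₂ => ⟨row₂ h₂, x_lt_z h₂⟩, fun h₂ h₄ => ?_⟩
  have hbal : (d₄₃ : ℤ) * (y - z) = d₄₂ * (z - x) := by
    have := row₄ h₄
    push_cast [h₄] at this
    linear_combination this
  exact ⟨row₄ h₄, hbal, x_lt_z h₂, lt_of_mul_sub_eq_mul_pos (Int.natCast_nonneg d₄₃)
    (Int.natCast_pos.2 hd₄₂) (sub_pos.2 (x_lt_z h₂)) hbal⟩

/-- Row-sum conditions force `x < z` and `x < z < y`. -/
theorem stmt_11
    (c₁ c₂ c₃ c₄ d₁₃ d₁₄ d₂₁ d₂₄ d₃₁ d₃₂ d₄₂ d₄₃ : ℕ)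
    (hc₁ : 2 ≤ c₁) (hc₂ : 2 ≤ c₂) (hc₃ : 2 ≤ c₃) (hc₄ : 2 ≤ c₄)
    (hd₁₃ : 0 < d₁₃) (hd₁₄ : 0 < d₁₄) (hd₂₁ : 0 < d₂₁) (hd₂₄ : 0 < d₂₄)
    (hd₃₁ : 0 < d₃₁) (hd₃₂ : 0 < d₃₂) (hd₄₂ : 0 < d₄₂) (hd₄₃ : 0 < d₄₃)
    (hcol₁ : c₁ = d₂₁ + d₃₁) (hcol₂ : c₂ = d₃₂ + d₄₂)
    (hcol₃ : c₃ = d₁₃ + d₄₃) (hcol₄ : c₄ = d₁₄ + d₂₄)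
    (A : Matrix (Fin 4) (Fin 4) ℤ)
    (hA : A = !![-(c₁ : ℤ), 0, (d₁₃ : ℤ), (d₁₄ : ℤ);
                 (d₂₁ : ℤ), -(c₂ : ℤ), 0, (d₂₄ : ℤ);
                 (d₃₁ : ℤ), (d₃₂ : ℤ), -(c₃ : ℤ), 0;
                 0, (d₄₂ : ℤ), (d₄₃ : ℤ), -(c₄ : ℤ)])
    (a x y z : ℤ) (hapos : 0 < a) (hxpos : 0 < x) (hypos : 0 < y) (hzpos : 0 < z)
    (hrel : A.mulVec ![a, a + x, a + y, a + z] = 0) :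
    (c₂ = d₂₁ + d₂₄ → (c₂ : ℤ) * x = (d₂₄ : ℤ) * z ∧ x < z) ∧
    (c₂ = d₂₁ + d₂₄ → c₄ = d₄₂ + d₄₃ →
      (d₄₂ : ℤ) * x + (d₄₃ : ℤ) * y = (c₄ : ℤ) * z ∧
      (d₄₃ : ℤ) * (y - z) = (d₄₂ : ℤ) * (z - x) ∧
      x < z ∧ z < y) :=
  stmt_11_general c₁ c₂ c₃ c₄ d₁₃ d₁₄ d₂₁ d₂₄ d₃₁ d₃₂ d₄₂ d₄₃ hd₂₁ hd₄₂ A hA a x y z hxpos hrel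
end

section
/- With A and u as in the context, suppose the entries of row 2 of A sum to zero (c₂ = d₂₁ + d₂₄) and the entries of row 4 of A sum to zero (c₄ = d₄₂ + d₄₃). Then u = b·(1, 1, 1, 1), where b = d₂₁·c₄ + d₂₄·d₄₃. -/
/-!
Every row of `U` sums to zero, so `U *ᵥ 1 = 0`. Completing `U` to a square matrix `M` by a first
row with entry sum `1` gives `M *ᵥ 1 = Pi.single 0 1`, and applying `adjugate M` shows that the
column `0` of `adjugate M`, whose entries are the signed maximal minors of `U`, is constantly
`det M`. The common value is then read off the minor obtained by deleting the first column.
-/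

open Matrix

variable {R : Type*} [CommRing R]

theorem Matrix.adjugate_apply_eq_det_of_mulVec_one_eq_single {n : Type*} [Fintype n]
    [DecidableEq n] (M : Matrix n n R) {i : n} (hM : M *ᵥ 1 = Pi.single i 1) (k : n) :
    adjugate M k i = det M := by
  have := congr_fun (congrArg (adjugate M *ᵥ ·) hM) k
  simpa [mulVec_mulVec, adjugate_mul, smul_mulVec, mulVec_single_one] using this.symm

theorem Matrix.neg_one_pow_mul_det_submatrix_succAbove_eq_of_sum_row_eq_zero {n : ℕ}
    (U : Matrix (Fin n) (Fin (n + 1)) R) (hU : ∀ i, ∑ j, U i j = 0) (k l : Fin (n + 1)) :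
    (-1) ^ (k : ℕ) * det (U.submatrix id k.succAbove) =
      (-1) ^ (l : ℕ) * det (U.submatrix id l.succAbove) := by
  let M : Matrix (Fin (n + 1)) (Fin (n + 1)) R := of (vecCons (Pi.single 0 1) (of.symm U))
  have hM : M *ᵥ 1 = Pi.single 0 1 := by
    refine funext fun i => Fin.cases ?_ (fun i => ?_) i
    · simp [M, mulVec, dotProduct]
    · simpa [M, mulVec, dotProduct] using hU i
  have hminor (k : Fin (n + 1)) : (-1) ^ (k : ℕ) * det (U.submatrix id k.succAbove) = det M := by
    rw [← M.adjugate_apply_eq_det_of_mulVec_one_eq_single hM k, adjugate_fin_succ_eq_det_submatrix,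
      Fin.val_zero, zero_add, Fin.succAbove_zero]
    rfl
  rw [hminor, hminor]

theorem stmt_12_general
    (c₂ c₄ d₂₁ d₂₄ d₄₂ d₄₃ : ℕ)
    (U : Matrix (Fin 3) (Fin 4) ℤ)
    (hU : U = !![(d₂₁ : ℤ), -(c₂ : ℤ), 0, (d₂₄ : ℤ);
                 1, 0, -1, 0;
                 0, (d₄₂ : ℤ), (d₄₃ : ℤ), -(c₄ : ℤ)])
    (u : Fin 4 → ℤ)
    (hu : ∀ j : Fin 4, u j = (-1) ^ ((j : ℕ) + 1) *
        (U.submatrix id (Fin.succAbove j)).det)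
    (hrow2 : c₂ = d₂₁ + d₂₄) (hrow4 : c₄ = d₄₂ + d₄₃) :
    ∀ j : Fin 4, u j = (d₂₁ : ℤ) * (c₄ : ℤ) + (d₂₄ : ℤ) * (d₄₃ : ℤ) := by
  have hrow_sum : ∀ i, ∑ j, U i j = 0 := by
    subst hU
    intro i
    fin_cases i <;> simp [Fin.sum_univ_four, hrow2, hrow4]
  intro j
  rw [hu, pow_succ, mul_comm _ (-1), mul_assoc,
    U.neg_one_pow_mul_det_submatrix_succAbove_eq_of_sum_row_eq_zero hrow_sum j 0]
  subst hU
  simp [det_fin_three, hrow2, hrow4]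
  ring

/-- When rows 2 and 4 of `A` sum to zero, the translation vector `u` is
`b·(1,1,1,1)` with `b = d₂₁c₄ + d₂₄d₄₃`. -/
theorem stmt_12
    (c₁ c₂ c₃ c₄ d₁₃ d₁₄ d₂₁ d₂₄ d₃₁ d₃₂ d₄₂ d₄₃ : ℕ)
    (hc₁ : 2 ≤ c₁) (hc₂ : 2 ≤ c₂) (hc₃ : 2 ≤ c₃) (hc₄ : 2 ≤ c₄)
    (hd₁₃ : 0 < d₁₃) (hd₁₄ : 0 < d₁₄) (hd₂₁ : 0 < d₂₁) (hd₂₄ : 0 < d₂₄)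
    (hd₃₁ : 0 < d₃₁) (hd₃₂ : 0 < d₃₂) (hd₄₂ : 0 < d₄₂) (hd₄₃ : 0 < d₄₃)
    (hcol₁ : c₁ = d₂₁ + d₃₁) (hcol₂ : c₂ = d₃₂ + d₄₂)
    (hcol₃ : c₃ = d₁₃ + d₄₃) (hcol₄ : c₄ = d₁₄ + d₂₄)
    (A : Matrix (Fin 4) (Fin 4) ℤ)
    (hA : A = !![-(c₁ : ℤ), 0, (d₁₃ : ℤ), (d₁₄ : ℤ);
                 (d₂₁ : ℤ), -(c₂ : ℤ), 0, (d₂₄ : ℤ);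
                 (d₃₁ : ℤ), (d₃₂ : ℤ), -(c₃ : ℤ), 0;
                 0, (d₄₂ : ℤ), (d₄₃ : ℤ), -(c₄ : ℤ)])
    (U : Matrix (Fin 3) (Fin 4) ℤ)
    (hU : U = !![(d₂₁ : ℤ), -(c₂ : ℤ), 0, (d₂₄ : ℤ);
                 1, 0, -1, 0;
                 0, (d₄₂ : ℤ), (d₄₃ : ℤ), -(c₄ : ℤ)])
    (u : Fin 4 → ℤ)
    (hu : ∀ j : Fin 4, u j = (-1) ^ ((j : ℕ) + 1) *
        (U.submatrix id (Fin.succAbove j)).det)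
    (hrow2 : c₂ = d₂₁ + d₂₄) (hrow4 : c₄ = d₄₂ + d₄₃) :
    ∀ j : Fin 4, u j = (d₂₁ : ℤ) * (c₄ : ℤ) + (d₂₄ : ℤ) * (d₄₃ : ℤ) :=
  stmt_12_general c₂ c₄ d₂₁ d₂₄ d₄₂ d₄₃ U hU u hu hrow2 hrow4
end

section
/- With A as in the context, let a, x, y, z be positive integers such that A·(a, a+x, a+y, a+z)ᵀ = 0, and suppose the entries of rows 2 and 4 of A each sum to zero (c₂ = d₂₁ + d₂₄ and c₄ = d₄₂ + d₄₃). Set d = gcd(x, z) and b = d₂₁·c₄ + d₂₄·d₄₃. Then there exists a positive integer q such that c₂ = q·(z/d) and d₂₄ = q·(x/d); moreover d divides d₄₃·y and q·d₄₃·y = d·b. -/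
/-!
The vector `(a, a + x, a + y, a + z)` is `a • 𝟙 + (0, x, y, z)`, and rows 2 and 4 of `A` sum to zero,
so `a` drops out of them: `c₂ x = d₂₄ z` and `d₄₂ x + d₄₃ y = c₄ z`. Dividing the first relation by
`d = gcd(x, z)` leaves coprime `x / d` and `z / d`, which forces `(c₂, d₂₄) = q • (z / d, x / d)`.
Then `d₄₃ y = c₄ z - d₄₂ x` is divisible by `d`, and multiplying it by `q` and substituting
`q z = d c₂`, `q x = d d₂₄` gives `q d₄₃ y = d b`.
-/

namespace Int

theorem exists_eq_mul_div_gcd_of_mul_eq_mul {c e x z : ℤ} (hz : z ≠ 0) (h : c * x = e * z) :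
    ∃ q, c = q * (z / (x.gcd z : ℤ)) ∧ e = q * (x / (x.gcd z : ℤ)) := by
  have hg : 0 < x.gcd z := gcd_pos_of_ne_zero_right x hz
  have hg₀ : (x.gcd z : ℤ) ≠ 0 := by exact_mod_cast hg.ne'
  have hcop := gcd_div_gcd_div_gcd hg
  have hdx : (x.gcd z : ℤ) ∣ x := gcd_dvd_left x z
  have hdz : (x.gcd z : ℤ) ∣ z := gcd_dvd_right x z
  generalize (x.gcd z : ℤ) = g at hg₀ hcop hdx hdz ⊢
  obtain ⟨x', rfl⟩ := hdx
  obtain ⟨z', rfl⟩ := hdz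
  rw [mul_ediv_cancel_left _ hg₀, mul_ediv_cancel_left _ hg₀] at hcop ⊢
  rw [← isCoprime_iff_gcd_eq_one] at hcop
  have h' : c * x' = e * z' := mul_left_cancel₀ hg₀ (by linear_combination h)
  obtain ⟨q, rfl⟩ : z' ∣ c := hcop.symm.dvd_of_dvd_mul_right ⟨e, by linear_combination h'⟩
  exact ⟨q, mul_comm _ _, mul_left_cancel₀ (right_ne_zero_of_mul hz) (by linear_combination -h')⟩

end Int

theorem stmt_13_general
    (c₁ c₂ c₃ c₄ d₁₃ d₁₄ d₂₁ d₂₄ d₃₁ d₃₂ d₄₂ d₄₃ : ℕ)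
    (hc₂ : 2 ≤ c₂)
    (A : Matrix (Fin 4) (Fin 4) ℤ)
    (hA : A = !![-(c₁ : ℤ), 0, (d₁₃ : ℤ), (d₁₄ : ℤ);
                 (d₂₁ : ℤ), -(c₂ : ℤ), 0, (d₂₄ : ℤ);
                 (d₃₁ : ℤ), (d₃₂ : ℤ), -(c₃ : ℤ), 0;
                 0, (d₄₂ : ℤ), (d₄₃ : ℤ), -(c₄ : ℤ)])
    (a x y z : ℤ) (hzpos : 0 < z)
    (hrel : A.mulVec ![a, a + x, a + y, a + z] = 0)
    (hrow2 : c₂ = d₂₁ + d₂₄) (hrow4 : c₄ = d₄₂ + d₄₃)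
    (d : ℕ) (hd : d = Int.gcd x z)
    (b : ℤ) (hb : b = (d₂₁ : ℤ) * (c₄ : ℤ) + (d₂₄ : ℤ) * (d₄₃ : ℤ)) :
    ∃ q : ℤ, 0 < q ∧ (c₂ : ℤ) = q * (z / (d : ℤ)) ∧ (d₂₄ : ℤ) = q * (x / (d : ℤ)) ∧
      (d : ℤ) ∣ (d₄₃ : ℤ) * y ∧ q * ((d₄₃ : ℤ) * y) = (d : ℤ) * b := by
  subst hA hd hb
  have hrow₂ := congrFun hrel 1
  have hrow₄ := congrFun hrel 3
  simp only [Matrix.mulVec, dotProduct, Fin.isValue, Matrix.of_apply, Matrix.cons_val',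
    Matrix.cons_val_fin_one, Matrix.cons_val_one, Matrix.cons_val_zero, Fin.sum_univ_four, neg_mul,
    Matrix.cons_val, zero_mul, add_zero, Pi.zero_apply, zero_add] at hrow₂ hrow₄
  have hsum₂ : (c₂ : ℤ) = d₂₁ + d₂₄ := by exact_mod_cast hrow2
  have hsum₄ : (c₄ : ℤ) = d₄₂ + d₄₃ := by exact_mod_cast hrow4
  have hx : (c₂ : ℤ) * x = d₂₄ * z := by linear_combination -hrow₂ - a * hsum₂
  have hy : (d₄₃ : ℤ) * y = c₄ * z - d₄₂ * x := by linear_combination hrow₄ + a * hsum₄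
  obtain ⟨q, hc₂q, hd₂₄q⟩ := Int.exists_eq_mul_div_gcd_of_mul_eq_mul hzpos.ne' hx
  have hdx : (x.gcd z : ℤ) ∣ x := Int.gcd_dvd_left x z
  have hdz : (x.gcd z : ℤ) ∣ z := Int.gcd_dvd_right x z
  have hqx : q * x = x.gcd z * d₂₄ := by
    linear_combination -(x.gcd z : ℤ) * hd₂₄q - q * Int.mul_ediv_cancel' hdx
  have hqz : q * z = x.gcd z * c₂ := by
    linear_combination -(x.gcd z : ℤ) * hc₂q - q * Int.mul_ediv_cancel' hdz
  have hq : 0 < q := by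
    refine pos_of_mul_pos_left (hc₂q ▸ (by omega)) (Int.ediv_pos_of_pos_of_dvd hzpos ?_ hdz).le
    positivity
  refine ⟨q, hq, hc₂q, hd₂₄q, hy ▸ dvd_sub (hdz.mul_left _) (hdx.mul_left _), ?_⟩
  linear_combination q * hy + c₄ * hqz - d₄₂ * hqx + x.gcd z * c₄ * hsum₂ + x.gcd z * d₂₄ * hsum₄

/-- Arithmetic consequences of rows 2 and 4 summing to zero. -/
theorem stmt_13
    (c₁ c₂ c₃ c₄ d₁₃ d₁₄ d₂₁ d₂₄ d₃₁ d₃₂ d₄₂ d₄₃ : ℕ)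
    (hc₁ : 2 ≤ c₁) (hc₂ : 2 ≤ c₂) (hc₃ : 2 ≤ c₃) (hc₄ : 2 ≤ c₄)
    (hd₁₃ : 0 < d₁₃) (hd₁₄ : 0 < d₁₄) (hd₂₁ : 0 < d₂₁) (hd₂₄ : 0 < d₂₄)
    (hd₃₁ : 0 < d₃₁) (hd₃₂ : 0 < d₃₂) (hd₄₂ : 0 < d₄₂) (hd₄₃ : 0 < d₄₃)
    (hcol₁ : c₁ = d₂₁ + d₃₁) (hcol₂ : c₂ = d₃₂ + d₄₂)
    (hcol₃ : c₃ = d₁₃ + d₄₃) (hcol₄ : c₄ = d₁₄ + d₂₄)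
    (A : Matrix (Fin 4) (Fin 4) ℤ)
    (hA : A = !![-(c₁ : ℤ), 0, (d₁₃ : ℤ), (d₁₄ : ℤ);
                 (d₂₁ : ℤ), -(c₂ : ℤ), 0, (d₂₄ : ℤ);
                 (d₃₁ : ℤ), (d₃₂ : ℤ), -(c₃ : ℤ), 0;
                 0, (d₄₂ : ℤ), (d₄₃ : ℤ), -(c₄ : ℤ)])
    (a x y z : ℤ) (hapos : 0 < a) (hxpos : 0 < x) (hypos : 0 < y) (hzpos : 0 < z)
    (hrel : A.mulVec ![a, a + x, a + y, a + z] = 0)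
    (hrow2 : c₂ = d₂₁ + d₂₄) (hrow4 : c₄ = d₄₂ + d₄₃)
    (d : ℕ) (hd : d = Int.gcd x z)
    (b : ℤ) (hb : b = (d₂₁ : ℤ) * (c₄ : ℤ) + (d₂₄ : ℤ) * (d₄₃ : ℤ)) :
    ∃ q : ℤ, 0 < q ∧ (c₂ : ℤ) = q * (z / (d : ℤ)) ∧ (d₂₄ : ℤ) = q * (x / (d : ℤ)) ∧
      (d : ℤ) ∣ (d₄₃ : ℤ) * y ∧ q * ((d₄₃ : ℤ) * y) = (d : ℤ) * b :=
  stmt_13_general c₁ c₂ c₃ c₄ d₁₃ d₁₄ d₂₁ d₂₄ d₃₁ d₃₂ d₄₂ d₄₃ hc₂ A hA a x y z hzpos hrel hrow2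
    hrow4 d hd b hb
end

section
/- Let k be a field. With A and a₁, a₂, a₃, a₄ as in the context (so that A·(a₁, a₂, a₃, a₄)ᵀ = 0), the following five binomials all lie in the kernel I(a) of the k-algebra homomorphism φ_a : k[x₁, x₂, x₃, x₄] → k[t], xᵢ ↦ t^{aᵢ}: x₁^{c₁} − x₃^{d₁₃}x₄^{d₁₄}, x₃^{c₃} − x₁^{d₃₁}x₂^{d₃₂}, x₄^{c₄} − x₂^{d₄₂}x₃^{d₄₃}, x₂^{c₂} − x₁^{d₂₁}x₄^{d₂₄}, and x₁^{d₂₁}x₃^{d₄₃} − x₂^{d₃₂}x₄^{d₁₄}. -/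
/-!
Because the columns of `A` sum to zero, `det A = 0`, so the adjugate identity `A · adj A = det A • 1`
gives `A · a = 0`; concretely, the cofactors `aᵢ` are polynomials in the `dᵢⱼ` with nonnegative
coefficients satisfying the four row relations, and the sum of the relations of rows two and four
is the fifth. Under `xᵢ ↦ t^{aᵢ}` a binomial `x^u - x^v` goes to `t^{⟨a,u⟩} - t^{⟨a,v⟩}`, which
vanishes as soon as `⟨a,u⟩ = ⟨a,v⟩`.
-/

open MvPolynomial

section MonomialCurve

variable {R σ : Type*} [CommRing R] (w : σ → ℕ)

theorem aeval_X_pow_X_pow (i : σ) (n : ℕ) :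
    aeval (fun i => (Polynomial.X : Polynomial R) ^ w i) (X i ^ n : MvPolynomial σ R) =
      Polynomial.X ^ (w i * n) := by
  rw [map_pow, aeval_X, ← pow_mul]

theorem X_pow_sub_X_pow_mul_X_pow_mem_ker {i j l : σ} {m n p : ℕ}
    (h : w i * m = w j * n + w l * p) :
    (X i ^ m - X j ^ n * X l ^ p : MvPolynomial σ R) ∈
      RingHom.ker (aeval fun i => (Polynomial.X : Polynomial R) ^ w i) := by
  rw [RingHom.sub_mem_ker_iff, map_mul, aeval_X_pow_X_pow, aeval_X_pow_X_pow,
    aeval_X_pow_X_pow, ← pow_add, h]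

theorem X_pow_mul_X_pow_sub_X_pow_mul_X_pow_mem_ker {i j l q : σ} {m n p r : ℕ}
    (h : w i * m + w j * n = w l * p + w q * r) :
    (X i ^ m * X j ^ n - X l ^ p * X q ^ r : MvPolynomial σ R) ∈
      RingHom.ker (aeval fun i => (Polynomial.X : Polynomial R) ^ w i) := by
  simp only [RingHom.sub_mem_ker_iff, map_mul, aeval_X_pow_X_pow, ← pow_add, h]

end MonomialCurve

def bresinskyWeights (d₁₃ d₁₄ d₂₁ d₂₄ d₃₁ d₃₂ d₄₂ d₄₃ : ℕ) : Fin 4 → ℕ :=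
  ![d₃₂ * d₁₃ * (d₁₄ + d₂₄) + d₃₂ * d₄₃ * d₁₄ + d₄₂ * (d₁₃ + d₄₃) * d₁₄,
    d₂₁ * (d₁₃ + d₄₃) * (d₁₄ + d₂₄) + d₂₄ * d₃₁ * d₄₃,
    (d₂₁ + d₃₁) * d₃₂ * (d₁₄ + d₂₄) + d₃₁ * d₄₂ * d₁₄,
    d₂₁ * d₃₂ * d₄₃ + d₂₁ * (d₁₃ + d₄₃) * d₄₂ + (d₃₂ + d₄₂) * d₃₁ * d₄₃]

theorem cofactor_eq_bresinskyWeights (d₁₃ d₁₄ d₂₁ d₂₄ d₃₁ d₃₂ d₄₂ d₄₃ : ℕ) (j : Fin 4) :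
    (-1) ^ ((j : ℕ) + 1) *
      (!![-((d₂₁ + d₃₁ : ℕ) : ℤ), 0, (d₁₃ : ℤ), (d₁₄ : ℤ);
          (d₂₁ : ℤ), -((d₃₂ + d₄₂ : ℕ) : ℤ), 0, (d₂₄ : ℤ);
          (d₃₁ : ℤ), (d₃₂ : ℤ), -((d₁₃ + d₄₃ : ℕ) : ℤ), 0;
          0, (d₄₂ : ℤ), (d₄₃ : ℤ), -((d₁₄ + d₂₄ : ℕ) : ℤ)].submatrix
        (Fin.succAbove 0) (Fin.succAbove j)).det =
      bresinskyWeights d₁₃ d₁₄ d₂₁ d₂₄ d₃₁ d₃₂ d₄₂ d₄₃ j := by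
  fin_cases j <;>
    simp [Matrix.det_fin_three, Fin.succAbove, Fin.lt_def, bresinskyWeights] <;> ring

theorem bresinskyWeights_relations (d₁₃ d₁₄ d₂₁ d₂₄ d₃₁ d₃₂ d₄₂ d₄₃ : ℕ) :
    let w := bresinskyWeights d₁₃ d₁₄ d₂₁ d₂₄ d₃₁ d₃₂ d₄₂ d₄₃
    w 0 * (d₂₁ + d₃₁) = w 2 * d₁₃ + w 3 * d₁₄ ∧
    w 2 * (d₁₃ + d₄₃) = w 0 * d₃₁ + w 1 * d₃₂ ∧
    w 3 * (d₁₄ + d₂₄) = w 1 * d₄₂ + w 2 * d₄₃ ∧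
    w 1 * (d₃₂ + d₄₂) = w 0 * d₂₁ + w 3 * d₂₄ ∧
    w 0 * d₂₁ + w 2 * d₄₃ = w 1 * d₃₂ + w 3 * d₁₄ := by
  refine ⟨?_, ?_, ?_, ?_, ?_⟩ <;> simp only [bresinskyWeights, Matrix.cons_val] <;> ring

theorem stmt_15_general (k : Type*) [Field k]
    (c₁ c₂ c₃ c₄ d₁₃ d₁₄ d₂₁ d₂₄ d₃₁ d₃₂ d₄₂ d₄₃ : ℕ)
    (hcol₁ : c₁ = d₂₁ + d₃₁) (hcol₂ : c₂ = d₃₂ + d₄₂)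
    (hcol₃ : c₃ = d₁₃ + d₄₃) (hcol₄ : c₄ = d₁₄ + d₂₄)
    (A : Matrix (Fin 4) (Fin 4) ℤ)
    (hA : A = !![-(c₁ : ℤ), 0, (d₁₃ : ℤ), (d₁₄ : ℤ);
                 (d₂₁ : ℤ), -(c₂ : ℤ), 0, (d₂₄ : ℤ);
                 (d₃₁ : ℤ), (d₃₂ : ℤ), -(c₃ : ℤ), 0;
                 0, (d₄₂ : ℤ), (d₄₃ : ℤ), -(c₄ : ℤ)])
    (a : Fin 4 → ℤ)
    (ha : ∀ j : Fin 4, a j = (-1) ^ ((j : ℕ) + 1) *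
        (A.submatrix (Fin.succAbove 0) (Fin.succAbove j)).det)
    (φ : MvPolynomial (Fin 4) k →ₐ[k] Polynomial k)
    (hφ : φ = MvPolynomial.aeval
        (fun i : Fin 4 => (Polynomial.X : Polynomial k) ^ (a i).toNat)) :
    MvPolynomial.X (0 : Fin 4) ^ c₁ -
        MvPolynomial.X 2 ^ d₁₃ * MvPolynomial.X 3 ^ d₁₄ ∈ RingHom.ker φ ∧
    MvPolynomial.X (2 : Fin 4) ^ c₃ -
        MvPolynomial.X 0 ^ d₃₁ * MvPolynomial.X 1 ^ d₃₂ ∈ RingHom.ker φ ∧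
    MvPolynomial.X (3 : Fin 4) ^ c₄ -
        MvPolynomial.X 1 ^ d₄₂ * MvPolynomial.X 2 ^ d₄₃ ∈ RingHom.ker φ ∧
    MvPolynomial.X (1 : Fin 4) ^ c₂ -
        MvPolynomial.X 0 ^ d₂₁ * MvPolynomial.X 3 ^ d₂₄ ∈ RingHom.ker φ ∧
    MvPolynomial.X (0 : Fin 4) ^ d₂₁ * MvPolynomial.X 2 ^ d₄₃ -
        MvPolynomial.X 1 ^ d₃₂ * MvPolynomial.X 3 ^ d₁₄ ∈ RingHom.ker φ := by
  subst hcol₁ hcol₂ hcol₃ hcol₄ hA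
  set w := bresinskyWeights d₁₃ d₁₄ d₂₁ d₂₄ d₃₁ d₃₂ d₄₂ d₄₃
  have hφw : φ = aeval fun i => Polynomial.X ^ w i := by
    simp only [hφ, ha, cofactor_eq_bresinskyWeights, Int.toNat_natCast, w]
  obtain ⟨h₁, h₃, h₄, h₂, h₅⟩ := bresinskyWeights_relations d₁₃ d₁₄ d₂₁ d₂₄ d₃₁ d₃₂ d₄₂ d₄₃
  subst hφw
  exact ⟨X_pow_sub_X_pow_mul_X_pow_mem_ker w h₁, X_pow_sub_X_pow_mul_X_pow_mem_ker w h₃,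
    X_pow_sub_X_pow_mul_X_pow_mem_ker w h₄, X_pow_sub_X_pow_mul_X_pow_mem_ker w h₂,
    X_pow_mul_X_pow_sub_X_pow_mul_X_pow_mem_ker w h₅⟩

/-- The five Bresinsky binomials lie in the kernel of the parametrization map. -/
theorem stmt_15 (k : Type*) [Field k]
    (c₁ c₂ c₃ c₄ d₁₃ d₁₄ d₂₁ d₂₄ d₃₁ d₃₂ d₄₂ d₄₃ : ℕ)
    (hc₁ : 2 ≤ c₁) (hc₂ : 2 ≤ c₂) (hc₃ : 2 ≤ c₃) (hc₄ : 2 ≤ c₄)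
    (hd₁₃ : 0 < d₁₃) (hd₁₄ : 0 < d₁₄) (hd₂₁ : 0 < d₂₁) (hd₂₄ : 0 < d₂₄)
    (hd₃₁ : 0 < d₃₁) (hd₃₂ : 0 < d₃₂) (hd₄₂ : 0 < d₄₂) (hd₄₃ : 0 < d₄₃)
    (hcol₁ : c₁ = d₂₁ + d₃₁) (hcol₂ : c₂ = d₃₂ + d₄₂)
    (hcol₃ : c₃ = d₁₃ + d₄₃) (hcol₄ : c₄ = d₁₄ + d₂₄)
    (A : Matrix (Fin 4) (Fin 4) ℤ)
    (hA : A = !![-(c₁ : ℤ), 0, (d₁₃ : ℤ), (d₁₄ : ℤ);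
                 (d₂₁ : ℤ), -(c₂ : ℤ), 0, (d₂₄ : ℤ);
                 (d₃₁ : ℤ), (d₃₂ : ℤ), -(c₃ : ℤ), 0;
                 0, (d₄₂ : ℤ), (d₄₃ : ℤ), -(c₄ : ℤ)])
    (a : Fin 4 → ℤ)
    (ha : ∀ j : Fin 4, a j = (-1) ^ ((j : ℕ) + 1) *
        (A.submatrix (Fin.succAbove 0) (Fin.succAbove j)).det)
    (φ : MvPolynomial (Fin 4) k →ₐ[k] Polynomial k)
    (hφ : φ = MvPolynomial.aeval
        (fun i : Fin 4 => (Polynomial.X : Polynomial k) ^ (a i).toNat)) :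
    MvPolynomial.X (0 : Fin 4) ^ c₁ -
        MvPolynomial.X 2 ^ d₁₃ * MvPolynomial.X 3 ^ d₁₄ ∈ RingHom.ker φ ∧
    MvPolynomial.X (2 : Fin 4) ^ c₃ -
        MvPolynomial.X 0 ^ d₃₁ * MvPolynomial.X 1 ^ d₃₂ ∈ RingHom.ker φ ∧
    MvPolynomial.X (3 : Fin 4) ^ c₄ -
        MvPolynomial.X 1 ^ d₄₂ * MvPolynomial.X 2 ^ d₄₃ ∈ RingHom.ker φ ∧
    MvPolynomial.X (1 : Fin 4) ^ c₂ -
        MvPolynomial.X 0 ^ d₂₁ * MvPolynomial.X 3 ^ d₂₄ ∈ RingHom.ker φ ∧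
    MvPolynomial.X (0 : Fin 4) ^ d₂₁ * MvPolynomial.X 2 ^ d₄₃ -
        MvPolynomial.X 1 ^ d₃₂ * MvPolynomial.X 3 ^ d₁₄ ∈ RingHom.ker φ :=
  stmt_15_general k c₁ c₂ c₃ c₄ d₁₃ d₁₄ d₂₁ d₂₄ d₃₁ d₃₂ d₄₂ d₄₃ hcol₁ hcol₂ hcol₃ hcol₄ A hA a ha φ
    hφ
end

section
/- Let R be a commutative ring and let c₁, c₂, c₃, c₄ and d₁₃, d₁₄, d₂₁, d₂₄, d₃₁, d₃₂, d₄₂, d₄₃ be positive integers satisfying c₂ = d₃₂ + d₄₂ and c₄ = d₁₄ + d₂₄ and c₁ = d₂₁ + d₃₁ and c₃ = d₁₃ + d₄₃. In R[x₁, x₂, x₃, x₄], let δ be the row vector (x₁^{c₁} − x₃^{d₁₃}x₄^{d₁₄}, x₃^{c₃} − x₁^{d₃₁}x₂^{d₃₂}, x₄^{c₄} − x₂^{d₄₂}x₃^{d₄₃}, x₂^{c₂} − x₁^{d₂₁}x₄^{d₂₄}, x₁^{d₂₁}x₃^{d₄₃} − x₂^{d₃₂}x₄^{d₁₄}) and let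 φ be the 5×5 skew-symmetric matrix with rows (0, 0, x₂^{d₃₂}, x₃^{d₄₃}, x₄^{d₂₄}), (0, 0, x₁^{d₂₁}, x₄^{d₁₄}, x₂^{d₄₂}), (−x₂^{d₃₂}, −x₁^{d₂₁}, 0, 0, x₃^{d₁₃}), (−x₃^{d₄₃}, −x₄^{d₁₄}, 0, 0, x₁^{d₃₁}), (−x₄^{d₂₄}, −x₂^{d₄₂}, −x₃^{d₁₃}, −x₁^{d₃₁}, 0). Then δ·φ = 0, i.e. each of the five entries of the product row vector is the zero polynomial. -/
/-!
The entries of `δ` are, up to the signs `(-1)^i`, the Pfaffians of the 4×4 principal minors of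
the alternating matrix `φ` (each `c` splits as a sum of two `d`'s, which turns the pure power in
`δ` into a product of two entries of `φ`). For any alternating 5×5 matrix the signed
sub-Pfaffians form a row vector killed by the matrix: the `j`-th entry of the product is the
Laplace-type expansion of the Pfaffian of a 6×6 alternating matrix with two equal rows.
-/

section

variable {S : Type*} [CommRing S]

def pfaffian4 (A : Matrix (Fin 4) (Fin 4) S) : S :=
  A 0 1 * A 2 3 - A 0 2 * A 1 3 + A 0 3 * A 1 2

def signedSubPfaffians (A : Matrix (Fin 5) (Fin 5) S) : Fin 5 → S :=
  fun i => (-1) ^ (i : ℕ) * pfaffian4 (A.submatrix i.succAbove i.succAbove)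

theorem vecMul_signedSubPfaffians {A : Matrix (Fin 5) (Fin 5) S}
    (hskew : ∀ i j, A j i = -A i j) (hdiag : ∀ i, A i i = 0) :
    Matrix.vecMul (signedSubPfaffians A) A = 0 := by
  funext j
  fin_cases j <;>
    simp [Matrix.vecMul, dotProduct, Fin.sum_univ_five, signedSubPfaffians, pfaffian4, Fin.succAbove,
      hdiag, hskew 0 1, hskew 0 2, hskew 0 3, hskew 0 4, hskew 1 2, hskew 1 3, hskew 1 4,
      hskew 2 3, hskew 2 4, hskew 3 4] <;> ring

end

theorem stmt_17_general (R : Type*) [CommRing R]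
    (c₁ c₂ c₃ c₄ d₁₃ d₁₄ d₂₁ d₂₄ d₃₁ d₃₂ d₄₂ d₄₃ : ℕ)
    (hcol₂ : c₂ = d₃₂ + d₄₂) (hcol₄ : c₄ = d₁₄ + d₂₄)
    (hcol₁ : c₁ = d₂₁ + d₃₁) (hcol₃ : c₃ = d₁₃ + d₄₃)
    (δ : Fin 5 → MvPolynomial (Fin 4) R)
    (hδ : δ = ![MvPolynomial.X (0 : Fin 4) ^ c₁ -
        MvPolynomial.X 2 ^ d₁₃ * MvPolynomial.X 3 ^ d₁₄,
      MvPolynomial.X (2 : Fin 4) ^ c₃ -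
        MvPolynomial.X 0 ^ d₃₁ * MvPolynomial.X 1 ^ d₃₂,
      MvPolynomial.X (3 : Fin 4) ^ c₄ -
        MvPolynomial.X 1 ^ d₄₂ * MvPolynomial.X 2 ^ d₄₃,
      MvPolynomial.X (1 : Fin 4) ^ c₂ -
        MvPolynomial.X 0 ^ d₂₁ * MvPolynomial.X 3 ^ d₂₄,
      MvPolynomial.X (0 : Fin 4) ^ d₂₁ * MvPolynomial.X 2 ^ d₄₃ -
        MvPolynomial.X 1 ^ d₃₂ * MvPolynomial.X 3 ^ d₁₄])
    (Φ : Matrix (Fin 5) (Fin 5) (MvPolynomial (Fin 4) R))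
    (hΦ : Φ = !![0, 0, MvPolynomial.X 1 ^ d₃₂, MvPolynomial.X 2 ^ d₄₃,
                    MvPolynomial.X 3 ^ d₂₄;
                  0, 0, MvPolynomial.X 0 ^ d₂₁, MvPolynomial.X 3 ^ d₁₄,
                    MvPolynomial.X 1 ^ d₄₂;
                  -MvPolynomial.X 1 ^ d₃₂, -MvPolynomial.X 0 ^ d₂₁, 0, 0,
                    MvPolynomial.X 2 ^ d₁₃;
                  -MvPolynomial.X 2 ^ d₄₃, -MvPolynomial.X 3 ^ d₁₄, 0, 0,
                    MvPolynomial.X 0 ^ d₃₁;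
                  -MvPolynomial.X 3 ^ d₂₄, -MvPolynomial.X 1 ^ d₄₂,
                    -MvPolynomial.X 2 ^ d₁₃, -MvPolynomial.X 0 ^ d₃₁, 0]) :
    Matrix.vecMul δ Φ = 0 := by
  have hskew : ∀ i j, Φ j i = -Φ i j := by
    subst hΦ; intro i j; fin_cases i <;> fin_cases j <;> simp
  have hdiag : ∀ i, Φ i i = 0 := by
    subst hΦ; intro i; fin_cases i <;> simp
  have hδ_pf : δ = signedSubPfaffians Φ := by
    subst hδ hΦ hcol₁ hcol₂ hcol₃ hcol₄
    funext i
    fin_cases i <;> simp [signedSubPfaffians, pfaffian4, Fin.succAbove, pow_add] <;> ring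
  rw [hδ_pf, vecMul_signedSubPfaffians hskew hdiag]

/-- The Buchsbaum–Eisenbud complex condition `δ · φ = 0` for the Gorenstein
monomial curve resolution. -/
theorem stmt_17 (R : Type*) [CommRing R]
    (c₁ c₂ c₃ c₄ d₁₃ d₁₄ d₂₁ d₂₄ d₃₁ d₃₂ d₄₂ d₄₃ : ℕ)
    (hc₁ : 0 < c₁) (hc₂ : 0 < c₂) (hc₃ : 0 < c₃) (hc₄ : 0 < c₄)
    (hd₁₃ : 0 < d₁₃) (hd₁₄ : 0 < d₁₄) (hd₂₁ : 0 < d₂₁) (hd₂₄ : 0 < d₂₄)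
    (hd₃₁ : 0 < d₃₁) (hd₃₂ : 0 < d₃₂) (hd₄₂ : 0 < d₄₂) (hd₄₃ : 0 < d₄₃)
    (hcol₂ : c₂ = d₃₂ + d₄₂) (hcol₄ : c₄ = d₁₄ + d₂₄)
    (hcol₁ : c₁ = d₂₁ + d₃₁) (hcol₃ : c₃ = d₁₃ + d₄₃)
    (δ : Fin 5 → MvPolynomial (Fin 4) R)
    (hδ : δ = ![MvPolynomial.X (0 : Fin 4) ^ c₁ -
        MvPolynomial.X 2 ^ d₁₃ * MvPolynomial.X 3 ^ d₁₄,
      MvPolynomial.X (2 : Fin 4) ^ c₃ -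
        MvPolynomial.X 0 ^ d₃₁ * MvPolynomial.X 1 ^ d₃₂,
      MvPolynomial.X (3 : Fin 4) ^ c₄ -
        MvPolynomial.X 1 ^ d₄₂ * MvPolynomial.X 2 ^ d₄₃,
      MvPolynomial.X (1 : Fin 4) ^ c₂ -
        MvPolynomial.X 0 ^ d₂₁ * MvPolynomial.X 3 ^ d₂₄,
      MvPolynomial.X (0 : Fin 4) ^ d₂₁ * MvPolynomial.X 2 ^ d₄₃ -
        MvPolynomial.X 1 ^ d₃₂ * MvPolynomial.X 3 ^ d₁₄])
    (Φ : Matrix (Fin 5) (Fin 5) (MvPolynomial (Fin 4) R))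
    (hΦ : Φ = !![0, 0, MvPolynomial.X 1 ^ d₃₂, MvPolynomial.X 2 ^ d₄₃,
                    MvPolynomial.X 3 ^ d₂₄;
                  0, 0, MvPolynomial.X 0 ^ d₂₁, MvPolynomial.X 3 ^ d₁₄,
                    MvPolynomial.X 1 ^ d₄₂;
                  -MvPolynomial.X 1 ^ d₃₂, -MvPolynomial.X 0 ^ d₂₁, 0, 0,
                    MvPolynomial.X 2 ^ d₁₃;
                  -MvPolynomial.X 2 ^ d₄₃, -MvPolynomial.X 3 ^ d₁₄, 0, 0,
                    MvPolynomial.X 0 ^ d₃₁;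
                  -MvPolynomial.X 3 ^ d₂₄, -MvPolynomial.X 1 ^ d₄₂,
                    -MvPolynomial.X 2 ^ d₁₃, -MvPolynomial.X 0 ^ d₃₁, 0]) :
    Matrix.vecMul δ Φ = 0 :=
  stmt_17_general R c₁ c₂ c₃ c₄ d₁₃ d₁₄ d₂₁ d₂₄ d₃₁ d₃₂ d₄₂ d₄₃ hcol₂ hcol₄ hcol₁ hcol₃ δ hδ Φ hΦ
end
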